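/- arXiv:2503.21972 — 4 statements merged into one kernel-verified Lean document; each statement's English description precedes it below -/
import Mathlib

section
/- Let m ≥ 2 and n ≥ 3m² − 5m + 3 be integers, and set Q = 3m² − 6m + 2. Let E₁ = {x₀, x₁, y₀,…,y_{Q−1}}, E₂ = {y_Q, y_{Q+1}} and E₃ = {y_{Q+2}}. Then there exist a point R satisfying the equations E₂ = 0 and points S₁, S₂ satisfying the equations E₃ = 0, all in (ℂ^{m+1} ∖ {0}) × (ℂ^{n+1} ∖ {0}), such that the only bidegree (1,2) polynomial f lying simultaneously in the ideals generated by E₁, by E₂ and by E₃, and singular at R, S₁ and S₂, is f = 0. (This states that the equiabundant configuration B₂(m,n) of the paper is non-defective.) -/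
open MvPolynomial

/-- The variables `x_0, …, x_m, y_0, …, y_n` of the ring `ℂ[x_0,…,x_m,y_0,…,y_n]`. -/
abbrev SegreVar (m n : ℕ) : Type := Fin (m + 1) ⊕ Fin (n + 1)

/-- A point of `ℂ^{m+1} × ℂ^{n+1}`. -/
abbrev SegrePt (m n : ℕ) : Type := (Fin (m + 1) → ℂ) × (Fin (n + 1) → ℂ)

/-- The coordinate function of a point, indexed by the variables. -/
def ptFun {m n : ℕ} (P : SegrePt m n) : SegreVar m n → ℂ := Sum.elim P.1 P.2

/-- The point lies in `(ℂ^{m+1} ∖ {0}) × (ℂ^{n+1} ∖ {0})`. -/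
def ValidPt {m n : ℕ} (P : SegrePt m n) : Prop := P.1 ≠ 0 ∧ P.2 ≠ 0

/-- `f` has bidegree `(1,2)`: it is a `ℂ`-linear combination of monomials `x_i * y_j * y_k`. -/
def IsBidegree12 {m n : ℕ} (f : MvPolynomial (SegreVar m n) ℂ) : Prop :=
  f ∈ Submodule.span ℂ
    {g : MvPolynomial (SegreVar m n) ℂ |
      ∃ (i : Fin (m + 1)) (j k : Fin (n + 1)),
        g = X (Sum.inl i) * X (Sum.inr j) * X (Sum.inr k)}

/-- `f` is singular at `P`: all `m+n+2` partial derivatives of `f` vanish at `P`. -/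
def SingularAt {m n : ℕ} (f : MvPolynomial (SegreVar m n) ℂ) (P : SegrePt m n) : Prop :=
  ∀ v : SegreVar m n, eval (ptFun P) (pderiv v f) = 0

/-- The point `P` satisfies the equations `E = 0`. -/
def SatisfiesEqs {m n : ℕ} (P : SegrePt m n) (E : Set (SegreVar m n)) : Prop :=
  ∀ v ∈ E, ptFun P v = 0

/-- The ideal generated by the variables in `E`. -/
noncomputable def varIdeal (m n : ℕ) (E : Set (SegreVar m n)) : Ideal (MvPolynomial (SegreVar m n) ℂ) :=
  Ideal.span ((fun v => (X v : MvPolynomial (SegreVar m n) ℂ)) '' E)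

/-- The set of variables `x_i` with `a ≤ i < b`. -/
def xRange (m n a b : ℕ) : Set (SegreVar m n) :=
  {v | ∃ i : Fin (m + 1), v = Sum.inl i ∧ a ≤ (i : ℕ) ∧ (i : ℕ) < b}

/-- The set of variables `y_j` with `a ≤ j < b`. -/
def yRange (m n a b : ℕ) : Set (SegreVar m n) :=
  {v | ∃ j : Fin (n + 1), v = Sum.inr j ∧ a ≤ (j : ℕ) ∧ (j : ℕ) < b}

lemma bideg_support {m n : ℕ} {f : MvPolynomial (SegreVar m n) ℂ} (h : IsBidegree12 f) :
    ∀ d ∈ f.support, ∃ (i : Fin (m+1)) (j k : Fin (n+1)),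
      d = Finsupp.single (Sum.inl i) 1 + Finsupp.single (Sum.inr j) 1 + Finsupp.single (Sum.inr k) 1 := by
  induction h using Submodule.span_induction with
  | mem g hg =>
      obtain ⟨i, j, k, rfl⟩ := hg
      intro d hd
      refine ⟨i, j, k, ?_⟩
      have hX : (X (Sum.inl i) * X (Sum.inr j) * X (Sum.inr k) : MvPolynomial (SegreVar m n) ℂ)
          = monomial (Finsupp.single (Sum.inl i) 1 + Finsupp.single (Sum.inr j) 1
              + Finsupp.single (Sum.inr k) 1) 1 := by
        have e : ∀ v : SegreVar m n, (X v : MvPolynomial (SegreVar m n) ℂ)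
            = monomial (Finsupp.single v 1) 1 := fun v => rfl
        rw [e, e, e, monomial_mul, monomial_mul, mul_one, mul_one]
      rw [hX] at hd
      classical
      simp [support_monomial] at hd
      exact hd
  | zero => simp
  | add x y hx hy ihx ihy =>
      intro d hd
      rcases Finset.mem_union.mp (support_add hd) with h' | h'
      · exact ihx d h'
      · exact ihy d h'
  | smul a x hx ih =>
      intro d hd
      exact ih d (support_smul hd)

lemma coeff_eq_zero_of_singular {σ : Type*} [DecidableEq σ] (f : MvPolynomial σ ℂ) (g : σ → ℂ)
    (v : σ) (dt : σ →₀ ℕ)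
    (hterm : ∀ d ∈ f.support,
      ((d v : ℂ)) * ((d - Finsupp.single v 1).prod fun w e => g w ^ e)
        = if d = dt then 1 else 0)
    (hsing : eval g (pderiv v f) = 0) : coeff dt f = 0 := by
  classical
  have h1 : eval g (pderiv v f)
      = ∑ d ∈ f.support, coeff d f *
          ((d v : ℂ) * ((d - Finsupp.single v 1).prod fun w e => g w ^ e)) := by
    conv_lhs => rw [f.as_sum]
    rw [map_sum, map_sum]
    refine Finset.sum_congr rfl fun d _ => ?_
    rw [pderiv_monomial, eval_monomial]
    ring
  have h2 : ∑ d ∈ f.support, coeff d f *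
          ((d v : ℂ) * ((d - Finsupp.single v 1).prod fun w e => g w ^ e))
      = ∑ d ∈ f.support, if d = dt then coeff d f else 0 := by
    refine Finset.sum_congr rfl fun d hd => ?_
    rw [hterm d hd]
    split <;> simp
  rw [h1, h2, Finset.sum_ite_eq'] at hsing
  by_cases h : dt ∈ f.support
  · simpa [h] using hsing
  · exact notMem_support_iff.mp h

/-- aux done -/
theorem statement7 (m n : ℕ) (hm : 2 ≤ m)
    (hn : 3 * (m : ℤ) ^ 2 - 5 * m + 3 ≤ (n : ℤ))
    (Q : ℕ) (hQ : (Q : ℤ) = 3 * (m : ℤ) ^ 2 - 6 * m + 2) :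
    ∃ (R : SegrePt m n) (S : Fin 2 → SegrePt m n),
      ValidPt R ∧ (∀ i, ValidPt (S i)) ∧
      SatisfiesEqs R (yRange m n Q (Q + 2)) ∧
      (∀ i, SatisfiesEqs (S i) (yRange m n (Q + 2) (Q + 3))) ∧
      ∀ f : MvPolynomial (SegreVar m n) ℂ,
        IsBidegree12 f →
        f ∈ varIdeal m n (xRange m n 0 2 ∪ yRange m n 0 Q) →
        f ∈ varIdeal m n (yRange m n Q (Q + 2)) →
        f ∈ varIdeal m n (yRange m n (Q + 2) (Q + 3)) →
        SingularAt f R → (∀ i, SingularAt f (S i)) → f = 0 := by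
  classical
  have hmz : (2:ℤ) ≤ (m:ℤ) := by exact_mod_cast hm
  have hq3n : Q + 3 ≤ n := by
    have h1 : (Q:ℤ) + (m:ℤ) + 1 ≤ (n:ℤ) := by linarith
    omega
  let q0 : Fin (n+1) := ⟨Q, by omega⟩
  let q1 : Fin (n+1) := ⟨Q+1, by omega⟩
  let q2 : Fin (n+1) := ⟨Q+2, by omega⟩
  let i0 : Fin (m+1) := ⟨0, by omega⟩
  let i1 : Fin (m+1) := ⟨1, by omega⟩
  have hq01 : q0 ≠ q1 := by simp [q0, q1, Fin.ext_iff]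
  have hq02 : q0 ≠ q2 := by simp [q0, q2, Fin.ext_iff]
  have hq12 : q1 ≠ q2 := by simp [q1, q2, Fin.ext_iff]
  have hi01 : i0 ≠ i1 := by simp [i0, i1, Fin.ext_iff]
  let R : SegrePt m n := (fun i => if i = i0 then 1 else 0, fun j => if j = q2 then 1 else 0)
  let S : Fin 2 → SegrePt m n := fun t =>
    (fun i => if i = i1 then 1 else 0,
     fun j => if j = (if t = 0 then q0 else q1) then 1 else 0)
  have hR1 : ∀ i : Fin (m+1), ptFun R (Sum.inl i) = if i = i0 then 1 else 0 := fun _ => rfl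
  have hR2 : ∀ j : Fin (n+1), ptFun R (Sum.inr j) = if j = q2 then 1 else 0 := fun _ => rfl
  have hS1 : ∀ (t : Fin 2) (i : Fin (m+1)),
      ptFun (S t) (Sum.inl i) = if i = i1 then 1 else 0 := fun _ _ => rfl
  have hS2 : ∀ (t : Fin 2) (j : Fin (n+1)),
      ptFun (S t) (Sum.inr j) = if j = (if t = 0 then q0 else q1) then 1 else 0 := fun _ _ => rfl
  refine ⟨R, S, ?_, ?_, ?_, ?_, ?_⟩
  · constructor
    · intro h
      have := congrFun h i0
      simp [R] at this
    · intro h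
      have := congrFun h q2
      simp [R] at this
  · intro t
    constructor
    · intro h
      have := congrFun h i1
      simp [S] at this
    · intro h
      have := congrFun h (if t = 0 then q0 else q1)
      simp [S] at this
  · rintro v ⟨j, rfl, hj1, hj2⟩
    rw [hR2]
    rw [if_neg]
    intro h
    have : (j : ℕ) = Q + 2 := by rw [h]
    omega
  · intro t
    rintro v ⟨j, rfl, hj1, hj2⟩
    rw [hS2]
    rw [if_neg]
    intro h
    rcases eq_or_ne t 0 with rfl | ht
    · rw [if_pos rfl] at h
      have : (j : ℕ) = Q := by rw [h]
      omega
    · rw [if_neg ht] at h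
      have : (j : ℕ) = Q + 1 := by rw [h]
      omega
  · intro f hbi h1 h2 h3 hsR hsS
    let Dm : Fin (m+1) → Fin (n+1) → (SegreVar m n →₀ ℕ) := fun i q =>
      Finsupp.single (Sum.inl i) 1 + Finsupp.single (Sum.inr q) 1 + Finsupp.single (Sum.inr q2) 1
    simp only [varIdeal] at h1 h2 h3
    -- classification of the support
    have hcls : ∀ d ∈ f.support, ∃ (i : Fin (m+1)) (q : Fin (n+1)),
        (i = i0 ∨ i = i1) ∧ (q = q0 ∨ q = q1) ∧ d = Dm i q := by
      intro d hd
      obtain ⟨i, j, k, rfl⟩ := bideg_support hbi d hd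
      set d : SegreVar m n →₀ ℕ :=
        Finsupp.single (Sum.inl i) 1 + Finsupp.single (Sum.inr j) 1 + Finsupp.single (Sum.inr k) 1
        with hdDef
      obtain ⟨v, hv, hdv⟩ := mem_ideal_span_X_image.mp h3 d hd
      obtain ⟨w, rfl, hw1, hw2⟩ := hv
      have hwq2 : w = q2 := by
        apply Fin.ext
        show (w : ℕ) = Q + 2
        omega
      subst hwq2
      have hjk : j = q2 ∨ k = q2 := by
        by_contra hc
        push_neg at hc
        simp [hdDef, Finsupp.single_apply, hc.1, hc.2] at hdv
      obtain ⟨j', hd'⟩ : ∃ j', d = Finsupp.single (Sum.inl i) 1 + Finsupp.single (Sum.inr j') 1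
          + Finsupp.single (Sum.inr q2) 1 := by
        rcases hjk with h | h
        · exact ⟨k, by rw [hdDef, h]; exact add_right_comm _ _ _⟩
        · exact ⟨j, by rw [hdDef, h]⟩
      obtain ⟨v2, hv2, hdv2⟩ := mem_ideal_span_X_image.mp h2 d hd
      obtain ⟨w, rfl, hw1', hw2'⟩ := hv2
      have hq2w : q2 ≠ w := by
        intro h
        have : (Q:ℕ) + 2 = (w:ℕ) := congrArg Fin.val h
        omega
      have hjw : j' = w := by
        by_contra hc
        rw [hd'] at hdv2
        simp [Finsupp.single_apply, hc, hq2w] at hdv2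
      subst hjw
      have hj' : j' = q0 ∨ j' = q1 := by
        have : (j' : ℕ) = Q ∨ (j' : ℕ) = Q + 1 := by omega
        rcases this with h | h
        · exact Or.inl (Fin.ext h)
        · exact Or.inr (Fin.ext h)
      obtain ⟨v1, hv1, hdv1⟩ := mem_ideal_span_X_image.mp h1 d hd
      rcases hv1 with ⟨u, rfl, _, hu2⟩ | ⟨w', rfl, _, hw2''⟩
      · have hiu : i = u := by
          by_contra hc
          rw [hd'] at hdv1
          simp [Finsupp.single_apply, hc] at hdv1
        subst hiu
        have hi : i = i0 ∨ i = i1 := by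
          have : (i : ℕ) = 0 ∨ (i : ℕ) = 1 := by omega
          rcases this with h | h
          · exact Or.inl (Fin.ext h)
          · exact Or.inr (Fin.ext h)
        exact ⟨i, j', hi, hj', hd'⟩
      · exfalso
        rw [hd'] at hdv1
        have hj'w : j' ≠ w' := by
          intro h
          have h' := congrArg Fin.val h
          rcases hj' with h'' | h'' <;>
            · have := congrArg Fin.val h''
              omega
        have hq2w' : q2 ≠ w' := by
          intro h
          have : (Q:ℕ) + 2 = (w':ℕ) := congrArg Fin.val h
          omega
        simp [Finsupp.single_apply, hj'w, hq2w'] at hdv1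
    -- injectivity of Dm on relevant indices
    have hDinj : ∀ (i i' : Fin (m+1)) (q q' : Fin (n+1)), q ≠ q2 → q' ≠ q2 →
        Dm i q = Dm i' q' → i = i' ∧ q = q' := by
      intro i i' q q' hq hq' h
      constructor
      · by_contra hc
        have h1' := DFunLike.congr_fun h (Sum.inl i)
        simp [Dm, Finsupp.single_apply, Ne.symm hc] at h1'
      · by_contra hc
        have h2' := DFunLike.congr_fun h (Sum.inr q)
        simp [Dm, Finsupp.single_apply, Ne.symm hq, Ne.symm hc] at h2'
    have hDv : ∀ (i : Fin (m+1)) (q w : Fin (n+1)), w ≠ q2 →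
        (Dm i q) (Sum.inr w) = if q = w then 1 else 0 := by
      intro i q w hw
      simp [Dm, Finsupp.single_apply, Ne.symm hw]
    have hDv2 : ∀ (i : Fin (m+1)) (q : Fin (n+1)), q ≠ q2 → (Dm i q) (Sum.inr q2) = 1 := by
      intro i q hq
      simp [Dm, Finsupp.single_apply, hq]
    have hDsub1 : ∀ (i : Fin (m+1)) (q : Fin (n+1)),
        Dm i q - Finsupp.single (Sum.inr q) 1
          = Finsupp.single (Sum.inl i) 1 + Finsupp.single (Sum.inr q2) 1 := by
      intro i q
      rw [show Dm i q = (Finsupp.single (Sum.inl i) 1 + Finsupp.single (Sum.inr q2) 1)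
            + Finsupp.single (Sum.inr q) 1 from add_right_comm _ _ _]
      exact add_tsub_cancel_right _ _
    have hDsub2 : ∀ (i : Fin (m+1)) (q : Fin (n+1)),
        Dm i q - Finsupp.single (Sum.inr q2) 1
          = Finsupp.single (Sum.inl i) 1 + Finsupp.single (Sum.inr q) 1 :=
      fun i q => add_tsub_cancel_right _ _
    have hprod : ∀ (g : SegreVar m n → ℂ) (a b : SegreVar m n),
        (Finsupp.single a 1 + Finsupp.single b 1).prod (fun w e => g w ^ e) = g a * g b := by
      intro g a b
      rw [Finsupp.prod_add_index' (fun _ => pow_zero _) (fun _ _ _ => pow_add _ _ _)]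
      simp [Finsupp.prod_single_index]
    -- the four coefficients vanish
    have keyR : ∀ qt : Fin (n+1), qt = q0 ∨ qt = q1 → coeff (Dm i0 qt) f = 0 := by
      intro qt hqt
      have hqt2 : qt ≠ q2 := by rcases hqt with rfl | rfl; exacts [hq02, hq12]
      apply coeff_eq_zero_of_singular f (ptFun R) (Sum.inr qt) _ _ (hsR (Sum.inr qt))
      intro d hd
      obtain ⟨i, q, hi, hq, rfl⟩ := hcls d hd
      have hq2' : q ≠ q2 := by rcases hq with rfl | rfl; exacts [hq02, hq12]
      rcases eq_or_ne q qt with h | hne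
      · rw [h]
        rw [hDv i qt qt hqt2, if_pos rfl, hDsub1, hprod, hR1, hR2]
        rcases hi with rfl | rfl
        · simp
        · have hD : Dm i1 qt ≠ Dm i0 qt := fun he => hi01 ((hDinj _ _ _ _ hqt2 hqt2 he).1).symm
          simp [Ne.symm hi01, hD]
      · rw [hDv i q qt hqt2]
        have hD : Dm i q ≠ Dm i0 qt := fun he => hne (hDinj _ _ _ _ hq2' hqt2 he).2
        simp [hne, hD]
    have keyS : ∀ (t : Fin 2) (qt : Fin (n+1)), qt = (if t = 0 then q0 else q1) →
        coeff (Dm i1 qt) f = 0 := by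
      intro t qt hqtDef
      have hqtor : qt = q0 ∨ qt = q1 := by
        rcases eq_or_ne t 0 with rfl | ht
        · left; rw [hqtDef, if_pos rfl]
        · right; rw [hqtDef, if_neg ht]
      have hqt2 : qt ≠ q2 := by rcases hqtor with rfl | rfl; exacts [hq02, hq12]
      apply coeff_eq_zero_of_singular f (ptFun (S t)) (Sum.inr q2) _ _ (hsS t (Sum.inr q2))
      intro d hd
      obtain ⟨i, q, hi, hq, rfl⟩ := hcls d hd
      have hq2' : q ≠ q2 := by rcases hq with rfl | rfl; exacts [hq02, hq12]
      rw [hDv2 i q hq2', hDsub2, hprod, hS1, hS2, ← hqtDef]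
      rcases eq_or_ne i i1 with hEq | hne
      · rcases eq_or_ne q qt with hq' | hneq
        · have hD : Dm i q = Dm i1 qt := by rw [hEq, hq']
          simp [hEq, hq', hD]
        · have hD : Dm i q ≠ Dm i1 qt := fun he => hneq (hDinj _ _ _ _ hq2' hqt2 he).2
          simp [hneq, hD]
      · have hD : Dm i q ≠ Dm i1 qt := fun he => hne (hDinj _ _ _ _ hq2' hqt2 he).1
        simp [hne, hD]
    -- conclude
    rw [← support_eq_empty]
    by_contra hne
    obtain ⟨d, hd⟩ := Finset.nonempty_iff_ne_empty.mpr hne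
    have hcoeff : coeff d f ≠ 0 := mem_support_iff.mp hd
    obtain ⟨i, q, hi, hq, rfl⟩ := hcls d hd
    rcases hi with rfl | rfl
    · exact hcoeff (keyR q hq)
    · rcases hq with rfl | rfl
      · exact hcoeff (keyS 0 q0 (by rw [if_pos rfl]))
      · exact hcoeff (keyS 1 q1 (by rw [if_neg (by decide : ¬(1:Fin 2) = 0)]))
end

section
/- Let m ≥ 6 and n ≥ 3m² − 5m + 2 be integers. Set q = 3m² − 30m + 74 and partition the first 3m² − 6m + 8 indices of the y-variables into consecutive blocks: A of size q, B₂ and B₃ of size 12m − 48 each, C of size 24, D₂ and D₃ of size 2 each, and D₄ of size 2. Let E₁ = {x₀,x₁} ∪ {y_j : j ∈ A ∪ B₂ ∪ B₃ ∪ C}, E₂ = {x₂,x₃} ∪ {y_j : j ∈ B₂ ∪ C ∪ D₂}, E₃ = {x₄,x₅} ∪ {y_j : j ∈ B₃ ∪ C ∪ D₃} and E₄ = {y_j : j ∈ D₄}. Then there exist, in (ℂ^{m+1} ∖ {0}) × (ℂ^{n+1} ∖ {0}): 2 points satisfying E₂ = 0 and E₃ = 0; 2 points satisfying E₁ = 0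 and E₂ = 0; 2 points satisfying E₁ = 0 and E₃ = 0; m − 5 points satisfying E₁ = E₂ = E₃ = 0; and 36m − 84 points satisfying E₄ = 0, such that the only bidegree (1,2) polynomial f lying simultaneously in the ideals generated by E₁, E₂, E₃ and E₄, and singular at all chosen points, is f = 0. (This states that the equiabundant configuration D₁(m,n) of the paper is non-defective.) -/
open MvPolynomial

/- Blocks of y-indices (consecutive): `A = [0,q)`, `B₂ = [q, q+β)`, `B₃ = [q+β, q+2β)`,
`C = [q+2β, q+2β+24)`, `D₂ = [q+2β+24, q+2β+26)`, `D₃ = [q+2β+26, q+2β+28)`,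
`D₄ = [q+2β+28, q+2β+30)`, where `β = 12m - 48` is the size of the `B` blocks. -/

/-- `E₁ = {x₀,x₁} ∪ {y_j : j ∈ A ∪ B₂ ∪ B₃ ∪ C}`. -/
def D1E₁ (m n q β : ℕ) : Set (SegreVar m n) :=
  xRange m n 0 2 ∪ yRange m n 0 (q + 2 * β + 24)

/-- `E₂ = {x₂,x₃} ∪ {y_j : j ∈ B₂ ∪ C ∪ D₂}`. -/
def D1E₂ (m n q β : ℕ) : Set (SegreVar m n) :=
  xRange m n 2 4 ∪ yRange m n q (q + β) ∪ yRange m n (q + 2 * β) (q + 2 * β + 26)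

/-- `E₃ = {x₄,x₅} ∪ {y_j : j ∈ B₃ ∪ C ∪ D₃}`. -/
def D1E₃ (m n q β : ℕ) : Set (SegreVar m n) :=
  xRange m n 4 6 ∪ yRange m n (q + β) (q + 2 * β + 24)
    ∪ yRange m n (q + 2 * β + 26) (q + 2 * β + 28)

/-- `E₄ = {y_j : j ∈ D₄}`. -/
def D1E₄ (m n q β : ℕ) : Set (SegreVar m n) :=
  yRange m n (q + 2 * β + 28) (q + 2 * β + 30)

namespace S11

open Finsupp

variable {m n : ℕ}

/-- x-variable index from a natural number. -/
def XI (m a : ℕ) : Fin (m + 1) := ⟨a % (m + 1), Nat.mod_lt _ m.succ_pos⟩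

/-- y-variable index from a natural number. -/
def YI (n a : ℕ) : Fin (n + 1) := ⟨a % (n + 1), Nat.mod_lt _ n.succ_pos⟩

lemma XI_val {m a : ℕ} (h : a ≤ m) : ((XI m a : Fin (m+1)) : ℕ) = a :=
  Nat.mod_eq_of_lt (by omega)

lemma YI_val {n a : ℕ} (h : a ≤ n) : ((YI n a : Fin (n+1)) : ℕ) = a :=
  Nat.mod_eq_of_lt (by omega)

lemma YI_inj {n a b : ℕ} (ha : a ≤ n) (hb : b ≤ n) (h : YI n a = YI n b) : a = b := by
  have := congrArg Fin.val h
  rwa [YI_val ha, YI_val hb] at this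

/-- The exponent vector of the monomial `x_i * y_j * y_k`. -/
noncomputable def shF {m n : ℕ} (i : Fin (m + 1)) (j k : Fin (n + 1)) : SegreVar m n →₀ ℕ :=
  Finsupp.single (Sum.inl i) 1 + Finsupp.single (Sum.inr j) 1 + Finsupp.single (Sum.inr k) 1

lemma shF_apply_inl (i : Fin (m+1)) (j k : Fin (n+1)) (a : Fin (m+1)) :
    shF (m := m) (n := n) i j k (Sum.inl a) = if a = i then 1 else 0 := by
  simp [shF, Finsupp.single_apply, Sum.inl.injEq, eq_comm]

lemma shF_apply_inr (i : Fin (m+1)) (j k : Fin (n+1)) (w : Fin (n+1)) :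
    shF (m := m) (n := n) i j k (Sum.inr w) =
      (if w = j then 1 else 0) + (if w = k then 1 else 0) := by
  simp [shF, Finsupp.single_apply, Sum.inr.injEq, eq_comm]

lemma shF_swap (i : Fin (m+1)) (j k : Fin (n+1)) :
    shF (m := m) (n := n) i j k = shF i k j := by
  simp only [shF]
  rw [add_assoc, add_assoc, add_comm (Finsupp.single (Sum.inr j) 1)]

lemma shF_eq (i i' : Fin (m+1)) {j k j' k' : Fin (n+1)} (hjk : j ≠ k) (hj'k' : j' ≠ k')
    (h : shF (m := m) (n := n) i j k = shF i' j' k') :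
    i = i' ∧ ((j = j' ∧ k = k') ∨ (j = k' ∧ k = j')) := by
  have hi := congrArg (fun g => g (Sum.inl i)) h
  simp only [shF_apply_inl, if_pos rfl] at hi
  have hi2 : i = i' := by by_contra hc; rw [if_neg hc] at hi; exact one_ne_zero hi
  refine ⟨hi2, ?_⟩
  have hj := congrArg (fun g => g (Sum.inr j)) h
  have hk := congrArg (fun g => g (Sum.inr k)) h
  have hj' := congrArg (fun g => g (Sum.inr j')) h
  simp only [shF_apply_inr] at hj hk hj'
  rcases eq_or_ne j j' with h1|h1 <;> rcases eq_or_ne j k' with h2|h2 <;>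
    rcases eq_or_ne k j' with h3|h3 <;> rcases eq_or_ne k k' with h4|h4 <;>
    simp_all

/-- Point with 0/1 coordinates given by indicator of finsets. -/
def mkPt (m n : ℕ) (xs : Finset (Fin (m + 1))) (ys : Finset (Fin (n + 1))) : SegrePt m n :=
  (fun i => if i ∈ xs then 1 else 0, fun j => if j ∈ ys then 1 else 0)

lemma mkPt_valid {xs : Finset (Fin (m+1))} {ys : Finset (Fin (n+1))}
    (hx : xs.Nonempty) (hy : ys.Nonempty) : ValidPt (mkPt m n xs ys) := by
  obtain ⟨a, ha⟩ := hx
  obtain ⟨b, hb⟩ := hy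
  constructor
  · intro h
    have := congrFun h a
    simp [mkPt, ha] at this
  · intro h
    have := congrFun h b
    simp [mkPt, hb] at this

lemma mkPt_sat {xs : Finset (Fin (m+1))} {ys : Finset (Fin (n+1))} {E : Set (SegreVar m n)}
    (hx : ∀ a ∈ xs, Sum.inl a ∉ E) (hy : ∀ b ∈ ys, Sum.inr b ∉ E) :
    SatisfiesEqs (mkPt m n xs ys) E := by
  intro v hv
  cases v with
  | inl a =>
    have : a ∉ xs := fun hc => hx a hc hv
    simp [ptFun, mkPt, this]
  | inr b =>
    have : b ∉ ys := fun hc => hy b hc hv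
    simp [ptFun, mkPt, this]

lemma inl_mem_xRange {a b : ℕ} {i : Fin (m+1)} :
    (Sum.inl i : SegreVar m n) ∈ xRange m n a b ↔ a ≤ (i : ℕ) ∧ (i : ℕ) < b := by
  simp [xRange]

lemma inr_not_mem_xRange {a b : ℕ} {j : Fin (n+1)} :
    (Sum.inr j : SegreVar m n) ∉ xRange m n a b := by
  simp [xRange]

lemma inr_mem_yRange {a b : ℕ} {j : Fin (n+1)} :
    (Sum.inr j : SegreVar m n) ∈ yRange m n a b ↔ a ≤ (j : ℕ) ∧ (j : ℕ) < b := by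
  simp [yRange]

lemma inl_not_mem_yRange {a b : ℕ} {i : Fin (m+1)} :
    (Sum.inl i : SegreVar m n) ∉ yRange m n a b := by
  simp [yRange]

end S11

namespace S11

variable {m n : ℕ}

lemma supp_shape {f : MvPolynomial (SegreVar m n) ℂ} (hf : IsBidegree12 f) :
    ∀ μ ∈ f.support, ∃ (i : Fin (m+1)) (j k : Fin (n+1)), μ = shF i j k := by
  classical
  refine Submodule.span_induction
    (p := fun g _ => ∀ μ ∈ g.support, ∃ (i : Fin (m+1)) (j k : Fin (n+1)), μ = shF i j k)
    ?_ ?_ ?_ ?_ hf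
  · rintro g ⟨i, j, k, rfl⟩ μ hμ
    refine ⟨i, j, k, ?_⟩
    have hg : (X (Sum.inl i) * X (Sum.inr j) * X (Sum.inr k) : MvPolynomial (SegreVar m n) ℂ)
        = monomial (shF i j k) 1 := by
      rw [show (X (Sum.inl i) : MvPolynomial (SegreVar m n) ℂ)
            = monomial (Finsupp.single (Sum.inl i) 1) 1 from rfl,
          show (X (Sum.inr j) : MvPolynomial (SegreVar m n) ℂ)
            = monomial (Finsupp.single (Sum.inr j) 1) 1 from rfl,
          show (X (Sum.inr k) : MvPolynomial (SegreVar m n) ℂ)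
            = monomial (Finsupp.single (Sum.inr k) 1) 1 from rfl,
          monomial_mul, monomial_mul, shF]
      norm_num
    rw [hg, support_monomial] at hμ
    simp only [one_ne_zero, if_false, Finset.mem_singleton] at hμ
    exact hμ
  · simp
  · intro g h _ _ hg hh μ hμ
    rcases Finset.mem_union.mp (MvPolynomial.support_add hμ) with h' | h'
    exacts [hg μ h', hh μ h']
  · intro c g _ hg μ hμ
    exact hg μ (MvPolynomial.support_smul hμ)

lemma master {D : ℕ} {f : MvPolynomial (SegreVar m n) ℂ}
    (hsh : ∀ μ ∈ f.support, ∃ (i : Fin (m+1)) (j k : Fin (n+1)),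
      (j : ℕ) < D ∧ D ≤ (k : ℕ) ∧ μ = shF i j k)
    (xs : Finset (Fin (m+1))) (ys : Finset (Fin (n+1))) (b : Fin (n+1))
    (hs : eval (ptFun (mkPt m n xs ys)) (pderiv (Sum.inr b) f) = 0) :
    ∑ i ∈ xs, ∑ w ∈ ys, coeff (shF i b w) f = 0 := by
  classical
  set Pt : SegreVar m n → ℂ := ptFun (mkPt m n xs ys) with hPtdef
  have hPtl : ∀ a : Fin (m+1), Pt (Sum.inl a) = if a ∈ xs then 1 else 0 := fun a => rfl
  have hPtr : ∀ w : Fin (n+1), Pt (Sum.inr w) = if w ∈ ys then 1 else 0 := fun w => rfl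
  have hsub : ∀ (p1 : Fin (m+1)) (u w : Fin (n+1)),
      shF (m := m) (n := n) p1 u w - Finsupp.single (Sum.inr u) 1
        = Finsupp.single (Sum.inl p1) 1 + Finsupp.single (Sum.inr w) 1 := by
    intro p1 u w
    have h : shF (m := m) (n := n) p1 u w
        = (Finsupp.single (Sum.inl p1) 1 + Finsupp.single (Sum.inr w) 1)
            + Finsupp.single (Sum.inr u) 1 := by
      rw [shF]; abel
    rw [h, add_tsub_cancel_right]
  have hprod : ∀ (p1 : Fin (m+1)) (w : Fin (n+1)),
      ((Finsupp.single (Sum.inl p1) 1 + Finsupp.single (Sum.inr w) 1).prod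
          fun v e => Pt v ^ e)
        = Pt (Sum.inl p1) * Pt (Sum.inr w) := by
    intro p1 w
    rw [Finsupp.prod_add_index' (fun a => pow_zero _) (fun a e1 e2 => pow_add _ _ _)]
    simp [Finsupp.prod_single_index]
  set F : (SegreVar m n →₀ ℕ) → ℂ := fun μ =>
    coeff μ f * ((μ (Sum.inr b) : ℕ) : ℂ)
      * ((μ - Finsupp.single (Sum.inr b) 1).prod fun v e => Pt v ^ e) with hF
  have expand : eval Pt (pderiv (Sum.inr b) f) = ∑ μ ∈ f.support, F μ := by
    conv_lhs => rw [as_sum f]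
    rw [map_sum (pderiv (Sum.inr b)), map_sum (eval Pt)]
    refine Finset.sum_congr rfl fun μ _ => ?_
    rw [pderiv_monomial, eval_monomial, hF]
  set P : (SegreVar m n →₀ ℕ) → Prop := fun μ => ∃ i ∈ xs, ∃ w ∈ ys, μ = shF i b w with hP
  have hnsq : ∀ μ ∈ f.support, ∀ (p1 : Fin (m+1)) (u : Fin (n+1)), μ ≠ shF p1 u u := by
    intro μ hμ p1 u hequ
    obtain ⟨i, j, k, hjD, hkD, rfl⟩ := hsh μ hμ
    have hjk : j ≠ k := by intro h; rw [h] at hjD; omega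
    have h2 := congrArg (fun g => g (Sum.inr j)) hequ
    simp only [shF_apply_inr, if_pos rfl, if_neg hjk] at h2
    by_cases hju : j = u <;> simp [hju] at h2
  have hFkill : ∀ μ ∈ f.support, F μ ≠ 0 → P μ := by
    intro μ hμ hne
    obtain ⟨i, j, k, hjD, hkD, rfl⟩ := hsh μ hμ
    have hjk : j ≠ k := by intro h; rw [h] at hjD; omega
    rcases mul_ne_zero_iff.mp hne with ⟨h12, h3⟩
    rcases mul_ne_zero_iff.mp h12 with ⟨h1, h2⟩
    rw [shF_apply_inr] at h2
    have hb : b = j ∨ b = k := by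
      by_cases hbj : b = j
      · exact Or.inl hbj
      · by_cases hbk : b = k
        · exact Or.inr hbk
        · rw [if_neg hbj, if_neg hbk] at h2; simp at h2
    rcases hb with rfl | rfl
    · rw [hsub i b k, hprod] at h3
      rcases mul_ne_zero_iff.mp h3 with ⟨hx, hy⟩
      rw [hPtl] at hx
      rw [hPtr] at hy
      refine ⟨i, ?_, k, ?_, rfl⟩
      · by_contra hc; rw [if_neg hc] at hx; exact hx rfl
      · by_contra hc; rw [if_neg hc] at hy; exact hy rfl
    · rw [shF_swap, hsub i b j, hprod] at h3
      rcases mul_ne_zero_iff.mp h3 with ⟨hx, hy⟩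
      rw [hPtl] at hx
      rw [hPtr] at hy
      refine ⟨i, ?_, j, ?_, shF_swap i j b⟩
      · by_contra hc; rw [if_neg hc] at hx; exact hx rfl
      · by_contra hc; rw [if_neg hc] at hy; exact hy rfl
  have st1 : ∑ μ ∈ f.support.filter P, F μ = ∑ μ ∈ f.support, F μ :=
    Finset.sum_filter_of_ne hFkill
  have st2 : ∑ p ∈ (xs ×ˢ ys).filter (fun p => shF p.1 b p.2 ∈ f.support),
        coeff (shF p.1 b p.2) f
      = ∑ i ∈ xs, ∑ w ∈ ys, coeff (shF i b w) f := by
    rw [Finset.sum_filter_of_ne (fun p _ hne => mem_support_iff.mpr hne)]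
    exact Finset.sum_product _ _ _
  have hbne : ∀ (p : Fin (m+1) × Fin (n+1)), shF p.1 b p.2 ∈ f.support → b ≠ p.2 := by
    intro p hp h
    exact hnsq _ hp p.1 b (by rw [← h])
  have st3 : ∑ p ∈ (xs ×ˢ ys).filter (fun p => shF p.1 b p.2 ∈ f.support),
        coeff (shF p.1 b p.2) f
      = ∑ μ ∈ f.support.filter P, F μ := by
    refine Finset.sum_bij (fun p _ => shF p.1 b p.2) ?_ ?_ ?_ ?_
    · intro p hp
      rw [Finset.mem_filter] at hp ⊢
      rcases hp with ⟨hpmem, hpsupp⟩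
      rw [Finset.mem_product] at hpmem
      exact ⟨hpsupp, p.1, hpmem.1, p.2, hpmem.2, rfl⟩
    · intro p1 hp1 p2 hp2 heq
      rw [Finset.mem_filter] at hp1 hp2
      have hb1 : b ≠ p1.2 := hbne p1 hp1.2
      have hb2 : b ≠ p2.2 := hbne p2 hp2.2
      obtain ⟨hi, hrest⟩ := shF_eq p1.1 p2.1 hb1 hb2 heq
      rcases hrest with ⟨-, h22⟩ | ⟨hbb, -⟩
      · exact Prod.ext hi h22
      · exact absurd hbb hb2
    · intro μ hμ
      rw [Finset.mem_filter] at hμ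
      obtain ⟨hsupp, i, hi, w, hw, rfl⟩ := hμ
      exact ⟨(i, w), Finset.mem_filter.mpr
        ⟨Finset.mem_product.mpr ⟨hi, hw⟩, hsupp⟩, rfl⟩
    · intro p hp
      rw [Finset.mem_filter] at hp
      obtain ⟨hpm, hps⟩ := hp
      rw [Finset.mem_product] at hpm
      have hb : b ≠ p.2 := hbne p hps
      rw [hF]
      simp only
      rw [shF_apply_inr, if_pos rfl, if_neg hb, hsub p.1 b p.2, hprod, hPtl, hPtr,
        if_pos hpm.1, if_pos hpm.2]
      norm_num
  rw [← st2, st3, st1, ← expand]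
  exact hs

end S11

namespace S11

variable {m n q β : ℕ}

lemma inl_mem_E₁ {a : Fin (m+1)} :
    (Sum.inl a : SegreVar m n) ∈ D1E₁ m n q β ↔ (a : ℕ) < 2 := by
  simp [D1E₁, xRange, yRange]

lemma inr_mem_E₁ {w : Fin (n+1)} :
    (Sum.inr w : SegreVar m n) ∈ D1E₁ m n q β ↔ (w : ℕ) < q + 2*β + 24 := by
  simp [D1E₁, xRange, yRange]

lemma inl_mem_E₂ {a : Fin (m+1)} :
    (Sum.inl a : SegreVar m n) ∈ D1E₂ m n q β ↔ (2 ≤ (a:ℕ) ∧ (a:ℕ) < 4) := by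
  simp [D1E₂, xRange, yRange]

lemma inr_mem_E₂ {w : Fin (n+1)} :
    (Sum.inr w : SegreVar m n) ∈ D1E₂ m n q β ↔
      ((q ≤ (w:ℕ) ∧ (w:ℕ) < q + β) ∨ (q + 2*β ≤ (w:ℕ) ∧ (w:ℕ) < q + 2*β + 26)) := by
  simp [D1E₂, xRange, yRange]

lemma inl_mem_E₃ {a : Fin (m+1)} :
    (Sum.inl a : SegreVar m n) ∈ D1E₃ m n q β ↔ (4 ≤ (a:ℕ) ∧ (a:ℕ) < 6) := by
  simp [D1E₃, xRange, yRange]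

lemma inr_mem_E₃ {w : Fin (n+1)} :
    (Sum.inr w : SegreVar m n) ∈ D1E₃ m n q β ↔
      ((q + β ≤ (w:ℕ) ∧ (w:ℕ) < q + 2*β + 24)
        ∨ (q + 2*β + 26 ≤ (w:ℕ) ∧ (w:ℕ) < q + 2*β + 28)) := by
  simp [D1E₃, xRange, yRange]

lemma inl_mem_E₄ {a : Fin (m+1)} :
    (Sum.inl a : SegreVar m n) ∉ D1E₄ m n q β := by
  simp [D1E₄, yRange]

lemma inr_mem_E₄ {w : Fin (n+1)} :
    (Sum.inr w : SegreVar m n) ∈ D1E₄ m n q β ↔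
      (q + 2*β + 28 ≤ (w:ℕ) ∧ (w:ℕ) < q + 2*β + 30) := by
  simp [D1E₄, yRange]

lemma shape_adm {f : MvPolynomial (SegreVar m n) ℂ}
    (hf : IsBidegree12 f)
    (h1 : f ∈ varIdeal m n (D1E₁ m n q β))
    (h2 : f ∈ varIdeal m n (D1E₂ m n q β))
    (h3 : f ∈ varIdeal m n (D1E₃ m n q β))
    (h4 : f ∈ varIdeal m n (D1E₄ m n q β)) :
    ∀ μ ∈ f.support, ∃ (i : Fin (m+1)) (j e : Fin (n+1)),
      μ = shF i j e ∧ ((e:ℕ) = q+2*β+28 ∨ (e:ℕ) = q+2*β+29) ∧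
      ( (q+2*β ≤ (j:ℕ) ∧ (j:ℕ) < q+2*β+24) ∨
        (q+β ≤ (j:ℕ) ∧ (j:ℕ) < q+2*β ∧ 2 ≤ (i:ℕ) ∧ (i:ℕ) < 4) ∨
        (q ≤ (j:ℕ) ∧ (j:ℕ) < q+β ∧ 4 ≤ (i:ℕ) ∧ (i:ℕ) < 6) ) := by
  rw [varIdeal, mem_ideal_span_X_image] at h1 h2 h3 h4
  intro μ hμ
  obtain ⟨i, j, k, rfl⟩ := supp_shape hf μ hμ
  have key : ∀ v : SegreVar m n, (shF i j k) v ≠ 0 →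
      v = Sum.inl i ∨ v = Sum.inr j ∨ v = Sum.inr k := by
    intro v hv
    by_contra hc
    push_neg at hc
    obtain ⟨c1, c2, c3⟩ := hc
    apply hv
    cases v with
    | inl a =>
      rw [shF_apply_inl, if_neg (fun h => c1 (by rw [h]))]
    | inr w =>
      rw [shF_apply_inr, if_neg (fun h => c2 (by rw [h])), if_neg (fun h => c3 (by rw [h]))]
  have n1 : ((i:ℕ) < 2) ∨ ((j:ℕ) < q+2*β+24) ∨ ((k:ℕ) < q+2*β+24) := by
    obtain ⟨v, hvE, hv⟩ := h1 _ hμ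
    rcases key v hv with rfl | rfl | rfl
    · exact Or.inl (inl_mem_E₁.mp hvE)
    · exact Or.inr (Or.inl (inr_mem_E₁.mp hvE))
    · exact Or.inr (Or.inr (inr_mem_E₁.mp hvE))
  have n2 : (2 ≤ (i:ℕ) ∧ (i:ℕ) < 4)
      ∨ ((q ≤ (j:ℕ) ∧ (j:ℕ) < q + β) ∨ (q + 2*β ≤ (j:ℕ) ∧ (j:ℕ) < q + 2*β + 26))
      ∨ ((q ≤ (k:ℕ) ∧ (k:ℕ) < q + β) ∨ (q + 2*β ≤ (k:ℕ) ∧ (k:ℕ) < q + 2*β + 26)) := by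
    obtain ⟨v, hvE, hv⟩ := h2 _ hμ
    rcases key v hv with rfl | rfl | rfl
    · exact Or.inl (inl_mem_E₂.mp hvE)
    · exact Or.inr (Or.inl (inr_mem_E₂.mp hvE))
    · exact Or.inr (Or.inr (inr_mem_E₂.mp hvE))
  have n3 : (4 ≤ (i:ℕ) ∧ (i:ℕ) < 6)
      ∨ ((q + β ≤ (j:ℕ) ∧ (j:ℕ) < q + 2*β + 24)
          ∨ (q + 2*β + 26 ≤ (j:ℕ) ∧ (j:ℕ) < q + 2*β + 28))
      ∨ ((q + β ≤ (k:ℕ) ∧ (k:ℕ) < q + 2*β + 24)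
          ∨ (q + 2*β + 26 ≤ (k:ℕ) ∧ (k:ℕ) < q + 2*β + 28)) := by
    obtain ⟨v, hvE, hv⟩ := h3 _ hμ
    rcases key v hv with rfl | rfl | rfl
    · exact Or.inl (inl_mem_E₃.mp hvE)
    · exact Or.inr (Or.inl (inr_mem_E₃.mp hvE))
    · exact Or.inr (Or.inr (inr_mem_E₃.mp hvE))
  have n4 : (q + 2*β + 28 ≤ (j:ℕ) ∧ (j:ℕ) < q + 2*β + 30)
      ∨ (q + 2*β + 28 ≤ (k:ℕ) ∧ (k:ℕ) < q + 2*β + 30) := by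
    obtain ⟨v, hvE, hv⟩ := h4 _ hμ
    rcases key v hv with rfl | rfl | rfl
    · exact absurd hvE inl_mem_E₄
    · exact Or.inl (inr_mem_E₄.mp hvE)
    · exact Or.inr (inr_mem_E₄.mp hvE)
  by_cases hk : q + 2*β + 28 ≤ (k:ℕ)
  · exact ⟨i, j, k, rfl, by omega, by omega⟩
  · exact ⟨i, k, j, shF_swap i j k, by omega, by omega⟩

end S11

namespace S11

variable {m n : ℕ} {f : MvPolynomial (SegreVar m n) ℂ} {D : ℕ}

/-- Abbreviation for the refined support hypothesis. -/
def Hsh (D : ℕ) (f : MvPolynomial (SegreVar m n) ℂ) : Prop :=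
  ∀ μ ∈ f.support, ∃ (i : Fin (m+1)) (j k : Fin (n+1)),
    (j : ℕ) < D ∧ D ≤ (k : ℕ) ∧ μ = shF i j k

lemma cond11 (hsh : Hsh D f) (a : Fin (m+1)) (w : Fin (n+1))
    (hs : SingularAt f (mkPt m n {a} {w})) (b : Fin (n+1)) :
    coeff (shF a b w) f = 0 := by
  have h := master hsh {a} {w} b (hs (Sum.inr b))
  simpa using h

lemma cond21 (hsh : Hsh D f) {a a' : Fin (m+1)} (ha : a ≠ a') (w : Fin (n+1))
    (hs : SingularAt f (mkPt m n {a, a'} {w})) (b : Fin (n+1)) :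
    coeff (shF a b w) f + coeff (shF a' b w) f = 0 := by
  have h := master hsh {a, a'} {w} b (hs (Sum.inr b))
  rw [Finset.sum_pair ha] at h
  simpa using h

lemma cond12 (hsh : Hsh D f) (a : Fin (m+1)) {w w' : Fin (n+1)} (hw : w ≠ w')
    (hs : SingularAt f (mkPt m n {a} {w, w'})) (b : Fin (n+1)) :
    coeff (shF a b w) f + coeff (shF a b w') f = 0 := by
  have h := master hsh {a} {w, w'} b (hs (Sum.inr b))
  rw [Finset.sum_singleton, Finset.sum_pair hw] at h
  exact h

lemma cond22 (hsh : Hsh D f) {a a' : Fin (m+1)} (ha : a ≠ a') {w w' : Fin (n+1)} (hw : w ≠ w')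
    (hs : SingularAt f (mkPt m n {a, a'} {w, w'})) (b : Fin (n+1)) :
    (coeff (shF a b w) f + coeff (shF a b w') f)
      + (coeff (shF a' b w) f + coeff (shF a' b w') f) = 0 := by
  have h := master hsh {a, a'} {w, w'} b (hs (Sum.inr b))
  rw [Finset.sum_pair ha, Finset.sum_pair hw, Finset.sum_pair hw] at h
  exact h

lemma XI_ne {a a' : ℕ} (h : a ≤ m) (h' : a' ≤ m) (hne : a ≠ a') : XI m a ≠ XI m a' := by
  intro hc
  apply hne
  have := congrArg Fin.val hc
  rwa [XI_val h, XI_val h'] at this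

lemma YI_ne {a a' : ℕ} (h : a ≤ n) (h' : a' ≤ n) (hne : a ≠ a') : YI n a ≠ YI n a' := by
  intro hc
  exact hne (YI_inj h h' hc)

section Sat

variable {q β : ℕ} {xs : Finset (Fin (m+1))} {ys : Finset (Fin (n+1))}

lemma satE₁ (hx : ∀ v ∈ xs, 2 ≤ (v:ℕ))
    (hy : ∀ w ∈ ys, q + 2*β + 24 ≤ (w:ℕ)) :
    SatisfiesEqs (mkPt m n xs ys) (D1E₁ m n q β) := by
  refine mkPt_sat (fun a ha h => ?_) (fun w hw h => ?_)
  · rw [inl_mem_E₁] at h; have := hx a ha; omega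
  · rw [inr_mem_E₁] at h; have := hy w hw; omega

lemma satE₂ (hx : ∀ v ∈ xs, (v:ℕ) < 2 ∨ 4 ≤ (v:ℕ))
    (hy : ∀ w ∈ ys, (w:ℕ) < q ∨ (q + β ≤ (w:ℕ) ∧ (w:ℕ) < q + 2*β) ∨ q + 2*β + 26 ≤ (w:ℕ)) :
    SatisfiesEqs (mkPt m n xs ys) (D1E₂ m n q β) := by
  refine mkPt_sat (fun a ha h => ?_) (fun w hw h => ?_)
  · rw [inl_mem_E₂] at h; have := hx a ha; omega
  · rw [inr_mem_E₂] at h; have := hy w hw; omega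

lemma satE₃ (hx : ∀ v ∈ xs, (v:ℕ) < 4 ∨ 6 ≤ (v:ℕ))
    (hy : ∀ w ∈ ys, (w:ℕ) < q + β ∨ (q + 2*β + 24 ≤ (w:ℕ) ∧ (w:ℕ) < q + 2*β + 26)
        ∨ q + 2*β + 28 ≤ (w:ℕ)) :
    SatisfiesEqs (mkPt m n xs ys) (D1E₃ m n q β) := by
  refine mkPt_sat (fun a ha h => ?_) (fun w hw h => ?_)
  · rw [inl_mem_E₃] at h; have := hx a ha; omega
  · rw [inr_mem_E₃] at h; have := hy w hw; omega

lemma satE₄ (hy : ∀ w ∈ ys, (w:ℕ) < q + 2*β + 28) :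
    SatisfiesEqs (mkPt m n xs ys) (D1E₄ m n q β) := by
  refine mkPt_sat (fun a _ h => inl_mem_E₄ h) (fun w hw h => ?_)
  rw [inr_mem_E₄] at h; have := hy w hw; omega

end Sat

end S11

namespace S11

/-- Linear elimination, odd case (`m - 5` even). -/
lemma killOdd (q β mv : ℕ) (c : ℕ → ℕ → ℕ → ℂ)
    (hmpar : (mv - 5) % 2 = 0) (hm : 6 ≤ mv)
    (hP0 : ∀ j, c 1 j (q+2*β+28) = 0)
    (hP1 : ∀ j, c 0 j (q+2*β+29) = 0)
    (hS0 : ∀ j, c 3 j (q+2*β+28) = 0)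
    (hS1 : ∀ j, c 2 j (q+2*β+29) = 0)
    (hR0 : ∀ j, c 5 j (q+2*β+28) = 0)
    (hR1 : ∀ j, c 4 j (q+2*β+29) = 0)
    (hT : ∀ t, t < mv - 5 → ∀ j,
      c (6+t) j (if t % 2 = 0 then q+2*β+28 else q+2*β+29) = 0)
    (hUA : ∀ w, w < 24 → ∀ e, (e = q+2*β+28 ∨ e = q+2*β+29) →
      c 0 (q+2*β+w) e + c 1 (q+2*β+w) e = 0)
    (hUB : ∀ w, w < 24+β → ∀ e, (e = q+2*β+28 ∨ e = q+2*β+29) →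
      c 2 (q+β+w) e + c 3 (q+β+w) e = 0)
    (hUC : ∀ w, w < β → ∀ e, (e = q+2*β+28 ∨ e = q+2*β+29) →
      c 4 (q+w) e + c 5 (q+w) e = 0)
    (hUC' : ∀ w, w < 24 → ∀ e, (e = q+2*β+28 ∨ e = q+2*β+29) →
      c 4 (q+2*β+w) e + c 5 (q+2*β+w) e = 0)
    (hUD : ∀ t, t < (mv-5)/2 → ∀ w, w < 24 → ∀ e, (e = q+2*β+28 ∨ e = q+2*β+29) →
      c (6+2*t) (q+2*β+w) e + c (7+2*t) (q+2*β+w) e = 0) :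
    ∀ i j e, i ≤ mv → (e = q+2*β+28 ∨ e = q+2*β+29) →
      ((q+2*β ≤ j ∧ j < q+2*β+24) ∨ (q+β ≤ j ∧ j < q+2*β ∧ 2 ≤ i ∧ i < 4)
        ∨ (q ≤ j ∧ j < q+β ∧ 4 ≤ i ∧ i < 6)) →
      c i j e = 0 := by
  intro i j e him he hj
  rcases hj with ⟨hj1, hj2⟩ | ⟨hj1, hj2, hi1, hi2⟩ | ⟨hj1, hj2, hi1, hi2⟩
  · -- j in C
    obtain ⟨w, hw, rfl⟩ : ∃ w, w < 24 ∧ j = q+2*β+w := ⟨j - (q+2*β), by omega, by omega⟩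
    rcases Nat.lt_or_ge i 6 with hi6 | hi6
    · interval_cases i <;> rcases he with rfl | rfl
      · linear_combination hUA w hw _ (Or.inl rfl) - hP0 (q+2*β+w)
      · exact hP1 _
      · exact hP0 _
      · linear_combination hUA w hw _ (Or.inr rfl) - hP1 (q+2*β+w)
      · have h := hUB (β+w) (by omega) _ (Or.inl rfl)
        rw [show q+β+(β+w) = q+2*β+w by omega] at h
        linear_combination h - hS0 (q+2*β+w)
      · exact hS1 _
      · exact hS0 _
      · have h := hUB (β+w) (by omega) _ (Or.inr rfl)
        rw [show q+β+(β+w) = q+2*β+w by omega] at h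
        linear_combination h - hS1 (q+2*β+w)
      · linear_combination hUC' w hw _ (Or.inl rfl) - hR0 (q+2*β+w)
      · exact hR1 _
      · exact hR0 _
      · linear_combination hUC' w hw _ (Or.inr rfl) - hR1 (q+2*β+w)
    · rcases Nat.even_or_odd (i - 6) with ⟨t, ht⟩ | ⟨t, ht⟩
      · -- i = 6 + 2t
        obtain rfl : i = 6+2*t := by omega
        have htb : 2*t < mv - 5 := by omega
        have h0 : c (6+2*t) (q+2*β+w) (q+2*β+28) = 0 := by
          have h := hT (2*t) htb (q+2*β+w)
          rwa [if_pos (by omega)] at h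
        rcases he with rfl | rfl
        · exact h0
        · have htb' : 2*t+1 < mv - 5 := by omega
          have h1 : c (7+2*t) (q+2*β+w) (q+2*β+29) = 0 := by
            have h := hT (2*t+1) htb' (q+2*β+w)
            rwa [if_neg (by omega), show 6+(2*t+1) = 7+2*t by omega] at h
          have h2 := hUD t (by omega) w hw _ (Or.inr rfl)
          linear_combination h2 - h1
      · -- i = 7 + 2t
        obtain rfl : i = 7+2*t := by omega
        have htb : 2*t+1 < mv - 5 := by omega
        have h1 : c (7+2*t) (q+2*β+w) (q+2*β+29) = 0 := by
          have h := hT (2*t+1) htb (q+2*β+w)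
          rwa [if_neg (by omega), show 6+(2*t+1) = 7+2*t by omega] at h
        rcases he with rfl | rfl
        · have h0 : c (6+2*t) (q+2*β+w) (q+2*β+28) = 0 := by
            have h := hT (2*t) (by omega) (q+2*β+w)
            rwa [if_pos (by omega)] at h
          have h2 := hUD t (by omega) w hw _ (Or.inl rfl)
          linear_combination h2 - h0
        · exact h1
  · -- j in B₃, i ∈ {2,3}
    obtain ⟨w, hw, rfl⟩ : ∃ w, w < β ∧ j = q+β+w := ⟨j - (q+β), by omega, by omega⟩
    interval_cases i <;> rcases he with rfl | rfl
    · linear_combination hUB w (by omega) _ (Or.inl rfl) - hS0 (q+β+w)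
    · exact hS1 _
    · exact hS0 _
    · linear_combination hUB w (by omega) _ (Or.inr rfl) - hS1 (q+β+w)
  · -- j in B₂, i ∈ {4,5}
    obtain ⟨w, hw, rfl⟩ : ∃ w, w < β ∧ j = q+w := ⟨j - q, by omega, by omega⟩
    interval_cases i <;> rcases he with rfl | rfl
    · linear_combination hUC w hw _ (Or.inl rfl) - hR0 (q+w)
    · exact hR1 _
    · exact hR0 _
    · linear_combination hUC w hw _ (Or.inr rfl) - hR1 (q+w)

/-- Linear elimination, even case (`m - 5` odd). -/
lemma killEven (q β mv : ℕ) (c : ℕ → ℕ → ℕ → ℂ)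
    (hmpar : (mv - 5) % 2 = 1) (hm : 6 ≤ mv)
    (hP0 : ∀ j, c 1 j (q+2*β+28) = 0)
    (hP1 : ∀ j, c 0 j (q+2*β+29) = 0)
    (hS0 : ∀ j, c 3 j (q+2*β+28) = 0)
    (hS1 : ∀ j, c 2 j (q+2*β+29) = 0)
    (hR0 : ∀ j, c 5 j (q+2*β+28) = 0)
    (hR1 : ∀ j, c 4 j (q+2*β+29) = 0)
    (hT : ∀ t, t < mv - 6 → ∀ j,
      c (6+t) j (if t % 2 = 0 then q+2*β+28 else q+2*β+29) = 0)
    (hTs : ∀ j, c mv j (q+2*β+28) + c mv j (q+2*β+29) = 0)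
    (hU1 : ∀ s, s < 12 → ∀ e, (e = q+2*β+28 ∨ e = q+2*β+29) →
      c 0 (q+2*β+2*s) e + c mv (q+2*β+2*s) e = 0)
    (hU2 : ∀ s, s < 12 → ∀ e, (e = q+2*β+28 ∨ e = q+2*β+29) →
      c 1 (q+2*β+(2*s+1)) e + c mv (q+2*β+(2*s+1)) e = 0)
    (hU3 : ∀ s, s < 12 → ∀ e, (e = q+2*β+28 ∨ e = q+2*β+29) →
      (c 0 (q+2*β+2*s) e + c 0 (q+2*β+(2*s+1)) e)
        + (c 1 (q+2*β+2*s) e + c 1 (q+2*β+(2*s+1)) e) = 0)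
    (hUB : ∀ w, w < 24+β → ∀ e, (e = q+2*β+28 ∨ e = q+2*β+29) →
      c 2 (q+β+w) e + c 3 (q+β+w) e = 0)
    (hUC : ∀ w, w < β → ∀ e, (e = q+2*β+28 ∨ e = q+2*β+29) →
      c 4 (q+w) e + c 5 (q+w) e = 0)
    (hUC' : ∀ w, w < 24 → ∀ e, (e = q+2*β+28 ∨ e = q+2*β+29) →
      c 4 (q+2*β+w) e + c 5 (q+2*β+w) e = 0)
    (hUD : ∀ t, t < (mv-6)/2 → ∀ w, w < 24 → ∀ e, (e = q+2*β+28 ∨ e = q+2*β+29) →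
      c (6+2*t) (q+2*β+w) e + c (7+2*t) (q+2*β+w) e = 0) :
    ∀ i j e, i ≤ mv → (e = q+2*β+28 ∨ e = q+2*β+29) →
      ((q+2*β ≤ j ∧ j < q+2*β+24) ∨ (q+β ≤ j ∧ j < q+2*β ∧ 2 ≤ i ∧ i < 4)
        ∨ (q ≤ j ∧ j < q+β ∧ 4 ≤ i ∧ i < 6)) →
      c i j e = 0 := by
  have key01m : ∀ s, s < 12 → ∀ i, (i = 0 ∨ i = 1 ∨ i = mv) →
      ∀ j, (j = q+2*β+2*s ∨ j = q+2*β+(2*s+1)) →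
      ∀ e, (e = q+2*β+28 ∨ e = q+2*β+29) → c i j e = 0 := by
    intro s hs
    have e1 : c mv (q+2*β+2*s) (q+2*β+29) = 0 := by
      linear_combination hU1 s hs _ (Or.inr rfl) - hP1 (q+2*β+2*s)
    have e2 : c mv (q+2*β+2*s) (q+2*β+28) = 0 := by
      linear_combination hTs (q+2*β+2*s) - e1
    have e3 : c 0 (q+2*β+2*s) (q+2*β+28) = 0 := by
      linear_combination hU1 s hs _ (Or.inl rfl) - e2
    have e4 : c 1 (q+2*β+2*s) (q+2*β+28) = 0 := hP0 _
    have e5 : c 0 (q+2*β+2*s) (q+2*β+29) = 0 := hP1 _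
    have e6 : c 1 (q+2*β+(2*s+1)) (q+2*β+28) = 0 := hP0 _
    have e7 : c mv (q+2*β+(2*s+1)) (q+2*β+28) = 0 := by
      linear_combination hU2 s hs _ (Or.inl rfl) - e6
    have e8 : c mv (q+2*β+(2*s+1)) (q+2*β+29) = 0 := by
      linear_combination hTs (q+2*β+(2*s+1)) - e7
    have e9 : c 1 (q+2*β+(2*s+1)) (q+2*β+29) = 0 := by
      linear_combination hU2 s hs _ (Or.inr rfl) - e8
    have e10 : c 0 (q+2*β+(2*s+1)) (q+2*β+29) = 0 := hP1 _
    have e11 : c 0 (q+2*β+(2*s+1)) (q+2*β+28) = 0 := by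
      linear_combination hU3 s hs _ (Or.inl rfl) - e3 - e4 - e6
    have e12 : c 1 (q+2*β+2*s) (q+2*β+29) = 0 := by
      linear_combination hU3 s hs _ (Or.inr rfl) - e5 - e10 - e9
    rintro i (rfl | rfl | rfl) j (rfl | rfl) e (rfl | rfl) <;> assumption
  intro i j e him he hj
  rcases hj with ⟨hj1, hj2⟩ | ⟨hj1, hj2, hi1, hi2⟩ | ⟨hj1, hj2, hi1, hi2⟩
  · -- j in C
    obtain ⟨w, hw, rfl⟩ : ∃ w, w < 24 ∧ j = q+2*β+w := ⟨j - (q+2*β), by omega, by omega⟩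
    by_cases hi01m : i = 0 ∨ i = 1 ∨ i = mv
    · rcases Nat.even_or_odd w with ⟨s, hsw⟩ | ⟨s, hsw⟩
      · exact key01m s (by omega) i hi01m _ (Or.inl (by omega)) e he
      · exact key01m s (by omega) i hi01m _ (Or.inr (by omega)) e he
    · push_neg at hi01m
      obtain ⟨hne0, hne1, hnem⟩ := hi01m
      rcases Nat.lt_or_ge i 6 with hi6 | hi6
      · interval_cases i <;> rcases he with rfl | rfl
        · omega
        · omega
        · omega
        · omega
        · have h := hUB (β+w) (by omega) _ (Or.inl rfl)
          rw [show q+β+(β+w) = q+2*β+w by omega] at h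
          linear_combination h - hS0 (q+2*β+w)
        · exact hS1 _
        · exact hS0 _
        · have h := hUB (β+w) (by omega) _ (Or.inr rfl)
          rw [show q+β+(β+w) = q+2*β+w by omega] at h
          linear_combination h - hS1 (q+2*β+w)
        · linear_combination hUC' w hw _ (Or.inl rfl) - hR0 (q+2*β+w)
        · exact hR1 _
        · exact hR0 _
        · linear_combination hUC' w hw _ (Or.inr rfl) - hR1 (q+2*β+w)
      · have himlt : i < mv := by omega
        rcases Nat.even_or_odd (i - 6) with ⟨t, ht⟩ | ⟨t, ht⟩
        · obtain rfl : i = 6+2*t := by omega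
          have htb : 2*t < mv - 6 := by omega
          have h0 : c (6+2*t) (q+2*β+w) (q+2*β+28) = 0 := by
            have h := hT (2*t) htb (q+2*β+w)
            rwa [if_pos (by omega)] at h
          rcases he with rfl | rfl
          · exact h0
          · have h1 : c (7+2*t) (q+2*β+w) (q+2*β+29) = 0 := by
              have h := hT (2*t+1) (by omega) (q+2*β+w)
              rwa [if_neg (by omega), show 6+(2*t+1) = 7+2*t by omega] at h
            have h2 := hUD t (by omega) w hw _ (Or.inr rfl)
            linear_combination h2 - h1
        · obtain rfl : i = 7+2*t := by omega
          have htb : 2*t+1 < mv - 6 := by omega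
          have h1 : c (7+2*t) (q+2*β+w) (q+2*β+29) = 0 := by
            have h := hT (2*t+1) htb (q+2*β+w)
            rwa [if_neg (by omega), show 6+(2*t+1) = 7+2*t by omega] at h
          rcases he with rfl | rfl
          · have h0 : c (6+2*t) (q+2*β+w) (q+2*β+28) = 0 := by
              have h := hT (2*t) (by omega) (q+2*β+w)
              rwa [if_pos (by omega)] at h
            have h2 := hUD t (by omega) w hw _ (Or.inl rfl)
            linear_combination h2 - h0
          · exact h1
  · obtain ⟨w, hw, rfl⟩ : ∃ w, w < β ∧ j = q+β+w := ⟨j - (q+β), by omega, by omega⟩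
    interval_cases i <;> rcases he with rfl | rfl
    · linear_combination hUB w (by omega) _ (Or.inl rfl) - hS0 (q+β+w)
    · exact hS1 _
    · exact hS0 _
    · linear_combination hUB w (by omega) _ (Or.inr rfl) - hS1 (q+β+w)
  · obtain ⟨w, hw, rfl⟩ : ∃ w, w < β ∧ j = q+w := ⟨j - q, by omega, by omega⟩
    interval_cases i <;> rcases he with rfl | rfl
    · linear_combination hUC w hw _ (Or.inl rfl) - hR0 (q+w)
    · exact hR1 _
    · exact hR0 _
    · linear_combination hUC w hw _ (Or.inr rfl) - hR1 (q+w)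

end S11

namespace S11

/-- U-points, case `m - 5` even. -/
def UptOdd (m n q β : ℕ) (k : ℕ) : SegrePt m n :=
  if k < 24 then mkPt m n {XI m 0, XI m 1} {YI n (q+2*β+k)}
  else if k < 48 + β then mkPt m n {XI m 2, XI m 3} {YI n (q+β+(k-24))}
  else if k < 48 + 2*β then mkPt m n {XI m 4, XI m 5} {YI n (q+(k-(48+β)))}
  else if k < 72 + 2*β then mkPt m n {XI m 4, XI m 5} {YI n (q+2*β+(k-(48+2*β)))}
  else mkPt m n {XI m (6+2*((k-(72+2*β))/24)), XI m (7+2*((k-(72+2*β))/24))}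
         {YI n (q+2*β+((k-(72+2*β)) % 24))}

/-- U-points, case `m - 5` odd. -/
def UptEven (m n q β : ℕ) (k : ℕ) : SegrePt m n :=
  if k < 36 then
    (if k % 3 = 0 then mkPt m n {XI m 0, XI m m} {YI n (q+2*β+2*(k/3))}
     else if k % 3 = 1 then mkPt m n {XI m 1, XI m m} {YI n (q+2*β+(2*(k/3)+1))}
     else mkPt m n {XI m 0, XI m 1} {YI n (q+2*β+2*(k/3)), YI n (q+2*β+(2*(k/3)+1))})
  else if k < 60 + β then mkPt m n {XI m 2, XI m 3} {YI n (q+β+(k-36))}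
  else if k < 60 + 2*β then mkPt m n {XI m 4, XI m 5} {YI n (q+(k-(60+β)))}
  else if k < 84 + 2*β then mkPt m n {XI m 4, XI m 5} {YI n (q+2*β+(k-(60+2*β)))}
  else mkPt m n {XI m (6+2*((k-(84+2*β))/24)), XI m (7+2*((k-(84+2*β))/24))}
         {YI n (q+2*β+((k-(84+2*β)) % 24))}

variable {m n q β : ℕ}

lemma UptOdd_eq1 {k : ℕ} (hk : k < 24) :
    UptOdd m n q β k = mkPt m n {XI m 0, XI m 1} {YI n (q+2*β+k)} := by
  rw [UptOdd, if_pos hk]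

lemma UptOdd_eq2 {w : ℕ} (hw : w < 24 + β) :
    UptOdd m n q β (24 + w) = mkPt m n {XI m 2, XI m 3} {YI n (q+β+w)} := by
  rw [UptOdd, if_neg (by omega), if_pos (by omega), show 24 + w - 24 = w from by omega]

lemma UptOdd_eq3 {w : ℕ} (hw : w < β) :
    UptOdd m n q β (48 + β + w) = mkPt m n {XI m 4, XI m 5} {YI n (q+w)} := by
  rw [UptOdd, if_neg (by omega), if_neg (by omega), if_pos (by omega),
    show 48 + β + w - (48 + β) = w from by omega]

lemma UptOdd_eq4 {w : ℕ} (hw : w < 24) :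
    UptOdd m n q β (48 + 2*β + w) = mkPt m n {XI m 4, XI m 5} {YI n (q+2*β+w)} := by
  rw [UptOdd, if_neg (by omega), if_neg (by omega), if_neg (by omega), if_pos (by omega),
    show 48 + 2*β + w - (48 + 2*β) = w from by omega]

lemma UptOdd_eq5 {t w : ℕ} (hw : w < 24) :
    UptOdd m n q β (72 + 2*β + (24*t + w))
      = mkPt m n {XI m (6+2*t), XI m (7+2*t)} {YI n (q+2*β+w)} := by
  rw [UptOdd, if_neg (by omega), if_neg (by omega), if_neg (by omega), if_neg (by omega)]
  have h1 : 72 + 2*β + (24*t + w) - (72 + 2*β) = 24*t + w := by omega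
  rw [h1]
  have h2 : (24*t + w)/24 = t := by omega
  have h3 : (24*t + w) % 24 = w := by omega
  rw [h2, h3]

lemma UptEven_eq1a {s : ℕ} (hs : s < 12) :
    UptEven m n q β (3*s) = mkPt m n {XI m 0, XI m m} {YI n (q+2*β+2*s)} := by
  rw [UptEven, if_pos (by omega), if_pos (by omega)]
  congr 3
  omega

lemma UptEven_eq1b {s : ℕ} (hs : s < 12) :
    UptEven m n q β (3*s+1) = mkPt m n {XI m 1, XI m m} {YI n (q+2*β+(2*s+1))} := by
  rw [UptEven, if_pos (by omega), if_neg (by omega), if_pos (by omega)]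
  congr 3
  omega

lemma UptEven_eq1c {s : ℕ} (hs : s < 12) :
    UptEven m n q β (3*s+2)
      = mkPt m n {XI m 0, XI m 1} {YI n (q+2*β+2*s), YI n (q+2*β+(2*s+1))} := by
  rw [UptEven, if_pos (by omega), if_neg (by omega), if_neg (by omega)]
  have h : (3*s+2)/3 = s := by omega
  rw [h]

lemma UptEven_eq2 {w : ℕ} (hw : w < 24 + β) :
    UptEven m n q β (36 + w) = mkPt m n {XI m 2, XI m 3} {YI n (q+β+w)} := by
  rw [UptEven, if_neg (by omega), if_pos (by omega), show 36 + w - 36 = w from by omega]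

lemma UptEven_eq3 {w : ℕ} (hw : w < β) :
    UptEven m n q β (60 + β + w) = mkPt m n {XI m 4, XI m 5} {YI n (q+w)} := by
  rw [UptEven, if_neg (by omega), if_neg (by omega), if_pos (by omega),
    show 60 + β + w - (60 + β) = w from by omega]

lemma UptEven_eq4 {w : ℕ} (hw : w < 24) :
    UptEven m n q β (60 + 2*β + w) = mkPt m n {XI m 4, XI m 5} {YI n (q+2*β+w)} := by
  rw [UptEven, if_neg (by omega), if_neg (by omega), if_neg (by omega), if_pos (by omega),
    show 60 + 2*β + w - (60 + 2*β) = w from by omega]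

lemma UptEven_eq5 {t w : ℕ} (hw : w < 24) :
    UptEven m n q β (84 + 2*β + (24*t + w))
      = mkPt m n {XI m (6+2*t), XI m (7+2*t)} {YI n (q+2*β+w)} := by
  rw [UptEven, if_neg (by omega), if_neg (by omega), if_neg (by omega), if_neg (by omega)]
  have h1 : 84 + 2*β + (24*t + w) - (84 + 2*β) = 24*t + w := by omega
  rw [h1]
  have h2 : (24*t + w)/24 = t := by omega
  have h3 : (24*t + w) % 24 = w := by omega
  rw [h2, h3]

lemma UptOdd_valid (k : ℕ) : ValidPt (UptOdd m n q β k) := by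
  rw [UptOdd]
  split_ifs <;>
    exact mkPt_valid (Finset.insert_nonempty _ _) (Finset.singleton_nonempty _)

lemma UptEven_valid (k : ℕ) : ValidPt (UptEven m n q β k) := by
  rw [UptEven]
  split_ifs <;>
    first
    | exact mkPt_valid (Finset.insert_nonempty _ _) (Finset.singleton_nonempty _)
    | exact mkPt_valid (Finset.insert_nonempty _ _) (Finset.insert_nonempty _ _)

lemma UptOdd_satE₄ (hn' : q + 2*β + 29 ≤ n) (k : ℕ) :
    SatisfiesEqs (UptOdd m n q β k) (D1E₄ m n q β) := by
  rw [UptOdd]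
  split_ifs with h1 h2 h3 h4 <;>
  · refine satE₄ (fun w hw => ?_)
    simp only [Finset.mem_singleton] at hw
    subst hw
    rw [YI_val (by omega)]
    omega

lemma UptEven_satE₄ (hn' : q + 2*β + 29 ≤ n) (k : ℕ) :
    SatisfiesEqs (UptEven m n q β k) (D1E₄ m n q β) := by
  rw [UptEven]
  split_ifs with h1 h2 h3 h4 h5 h6 <;>
    refine satE₄ (fun w hw => ?_) <;>
    simp only [Finset.mem_singleton, Finset.mem_insert] at hw
  case _ => subst hw; rw [YI_val (by omega)]; omega
  case _ => subst hw; rw [YI_val (by omega)]; omega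
  case _ => rcases hw with rfl | rfl <;> [rw [YI_val (by omega)]; rw [YI_val (by omega)]] <;> omega
  case _ => subst hw; rw [YI_val (by omega)]; omega
  case _ => subst hw; rw [YI_val (by omega)]; omega
  case _ => subst hw; rw [YI_val (by omega)]; omega
  case _ => subst hw; rw [YI_val (by omega)]; omega

end S11

namespace S11

/-- T-points, case `m - 5` even. -/
def TptOdd (m n q β : ℕ) (t : ℕ) : SegrePt m n :=
  mkPt m n {XI m (6+t)} {YI n (if t % 2 = 0 then q+2*β+28 else q+2*β+29)}

/-- T-points, case `m - 5` odd. -/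
def TptEven (m n q β : ℕ) (t : ℕ) : SegrePt m n :=
  if t = m - 6 then mkPt m n {XI m m} {YI n (q+2*β+28), YI n (q+2*β+29)}
  else TptOdd m n q β t

variable {m n q β : ℕ}

lemma TptOdd_valid (t : ℕ) : ValidPt (TptOdd m n q β t) :=
  mkPt_valid (Finset.singleton_nonempty _) (Finset.singleton_nonempty _)

lemma TptEven_valid (t : ℕ) : ValidPt (TptEven m n q β t) := by
  rw [TptEven]
  split_ifs
  · exact mkPt_valid (Finset.singleton_nonempty _) (Finset.insert_nonempty _ _)
  · exact TptOdd_valid t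

lemma TptOdd_sat (hn' : q + 2*β + 29 ≤ n) (hm : 6 ≤ m) {t : ℕ} (ht : 6 + t ≤ m) :
    SatisfiesEqs (TptOdd m n q β t) (D1E₁ m n q β)
      ∧ SatisfiesEqs (TptOdd m n q β t) (D1E₂ m n q β)
      ∧ SatisfiesEqs (TptOdd m n q β t) (D1E₃ m n q β) := by
  have hyv : ((YI n (if t % 2 = 0 then q+2*β+28 else q+2*β+29) : Fin (n+1)) : ℕ)
      = (if t % 2 = 0 then q+2*β+28 else q+2*β+29) := YI_val (by split_ifs <;> omega)
  refine ⟨satE₁ (fun v hv => ?_) (fun w hw => ?_), satE₂ (fun v hv => ?_) (fun w hw => ?_),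
    satE₃ (fun v hv => ?_) (fun w hw => ?_)⟩
  · simp only [Finset.mem_singleton] at hv; subst hv; rw [XI_val (by omega)]; omega
  · simp only [Finset.mem_singleton] at hw; subst hw; rw [hyv]; split_ifs <;> omega
  · simp only [Finset.mem_singleton] at hv; subst hv; rw [XI_val (by omega)]; omega
  · simp only [Finset.mem_singleton] at hw; subst hw; rw [hyv]; split_ifs <;> omega
  · simp only [Finset.mem_singleton] at hv; subst hv; rw [XI_val (by omega)]; omega
  · simp only [Finset.mem_singleton] at hw; subst hw; rw [hyv]; split_ifs <;> omega

lemma TptEven_sat (hn' : q + 2*β + 29 ≤ n) (hm : 6 ≤ m) {t : ℕ} (ht : t < m - 5) :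
    SatisfiesEqs (TptEven m n q β t) (D1E₁ m n q β)
      ∧ SatisfiesEqs (TptEven m n q β t) (D1E₂ m n q β)
      ∧ SatisfiesEqs (TptEven m n q β t) (D1E₃ m n q β) := by
  rw [TptEven]
  split_ifs with hc
  · refine ⟨satE₁ (fun v hv => ?_) (fun w hw => ?_), satE₂ (fun v hv => ?_) (fun w hw => ?_),
      satE₃ (fun v hv => ?_) (fun w hw => ?_)⟩
    · simp only [Finset.mem_singleton] at hv; subst hv; rw [XI_val (by omega)]; omega
    · simp only [Finset.mem_insert, Finset.mem_singleton] at hw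
      rcases hw with rfl | rfl <;> rw [YI_val (by omega)] <;> omega
    · simp only [Finset.mem_singleton] at hv; subst hv; rw [XI_val (by omega)]; omega
    · simp only [Finset.mem_insert, Finset.mem_singleton] at hw
      rcases hw with rfl | rfl <;> rw [YI_val (by omega)] <;> omega
    · simp only [Finset.mem_singleton] at hv; subst hv; rw [XI_val (by omega)]; omega
    · simp only [Finset.mem_insert, Finset.mem_singleton] at hw
      rcases hw with rfl | rfl <;> rw [YI_val (by omega)] <;> omega
  · exact TptOdd_sat hn' hm (by omega)

end S11

namespace S11

variable {m n q β : ℕ}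

lemma pt_satE₁ {a u : ℕ} (ham : a ≤ m) (ha : 2 ≤ a) (hu1 : q+2*β+24 ≤ u) (hu2 : u ≤ n) :
    SatisfiesEqs (mkPt m n {XI m a} {YI n u}) (D1E₁ m n q β) :=
  satE₁
    (fun v hv => by
      simp only [Finset.mem_singleton] at hv; subst hv; rw [XI_val ham]; omega)
    (fun w hw => by
      simp only [Finset.mem_singleton] at hw; subst hw; rw [YI_val hu2]; omega)

lemma pt_satE₂ {a u : ℕ} (ham : a ≤ m) (ha : a < 2 ∨ 4 ≤ a) (hu1 : q+2*β+26 ≤ u)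
    (hu2 : u ≤ n) :
    SatisfiesEqs (mkPt m n {XI m a} {YI n u}) (D1E₂ m n q β) :=
  satE₂
    (fun v hv => by
      simp only [Finset.mem_singleton] at hv; subst hv; rw [XI_val ham]; omega)
    (fun w hw => by
      simp only [Finset.mem_singleton] at hw; subst hw; rw [YI_val hu2]; omega)

lemma pt_satE₃ {a u : ℕ} (ham : a ≤ m) (ha : a < 4 ∨ 6 ≤ a) (hu1 : q+2*β+28 ≤ u)
    (hu2 : u ≤ n) :
    SatisfiesEqs (mkPt m n {XI m a} {YI n u}) (D1E₃ m n q β) :=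
  satE₃
    (fun v hv => by
      simp only [Finset.mem_singleton] at hv; subst hv; rw [XI_val ham]; omega)
    (fun w hw => by
      simp only [Finset.mem_singleton] at hw; subst hw; rw [YI_val hu2]; omega)

end S11

open S11 in
/-- The equiabundant configuration `D₁(m,n)` is non-defective for `m ≥ 6` and
`n ≥ 3m² - 5m + 2`. -/
theorem statement11 (m n : ℕ) (hm : 6 ≤ m)
    (hn : 3 * (m : ℤ) ^ 2 - 5 * m + 2 ≤ (n : ℤ))
    (q β c₄ : ℕ)
    (hq : (q : ℤ) = 3 * (m : ℤ) ^ 2 - 30 * m + 74)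
    (hβ : (β : ℤ) = 12 * (m : ℤ) - 48)
    (hc₄ : (c₄ : ℤ) = 36 * (m : ℤ) - 84) :
    ∃ (P : Fin 2 → SegrePt m n) (R : Fin 2 → SegrePt m n) (S : Fin 2 → SegrePt m n)
      (T : Fin (m - 5) → SegrePt m n) (U : Fin c₄ → SegrePt m n),
      (∀ i, ValidPt (P i)) ∧ (∀ i, ValidPt (R i)) ∧ (∀ i, ValidPt (S i)) ∧
      (∀ i, ValidPt (T i)) ∧ (∀ i, ValidPt (U i)) ∧
      (∀ i, SatisfiesEqs (P i) (D1E₂ m n q β)) ∧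
      (∀ i, SatisfiesEqs (P i) (D1E₃ m n q β)) ∧
      (∀ i, SatisfiesEqs (R i) (D1E₁ m n q β)) ∧
      (∀ i, SatisfiesEqs (R i) (D1E₂ m n q β)) ∧
      (∀ i, SatisfiesEqs (S i) (D1E₁ m n q β)) ∧
      (∀ i, SatisfiesEqs (S i) (D1E₃ m n q β)) ∧
      (∀ i, SatisfiesEqs (T i) (D1E₁ m n q β)) ∧
      (∀ i, SatisfiesEqs (T i) (D1E₂ m n q β)) ∧
      (∀ i, SatisfiesEqs (T i) (D1E₃ m n q β)) ∧
      (∀ i, SatisfiesEqs (U i) (D1E₄ m n q β)) ∧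
      ∀ f : MvPolynomial (SegreVar m n) ℂ,
        IsBidegree12 f →
        f ∈ varIdeal m n (D1E₁ m n q β) →
        f ∈ varIdeal m n (D1E₂ m n q β) →
        f ∈ varIdeal m n (D1E₃ m n q β) →
        f ∈ varIdeal m n (D1E₄ m n q β) →
        (∀ i, SingularAt f (P i)) → (∀ i, SingularAt f (R i)) →
        (∀ i, SingularAt f (S i)) → (∀ i, SingularAt f (T i)) →
        (∀ i, SingularAt f (U i)) → f = 0 := by
  classical
  have hmz : (6:ℤ) ≤ (m:ℤ) := by exact_mod_cast hm
  have hβn : β = 12*m - 48 := by omega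
  have hc4n : c₄ = 36*m - 84 := by omega
  have hnz : (q:ℤ) + 2*(β:ℤ) + 29 ≤ (n:ℤ) := by linarith
  have hn' : q + 2*β + 29 ≤ n := by omega
  rcases Nat.even_or_odd (m - 5) with hpar | hpar
  · -- `m - 5` even
    have hpar' : (m - 5) % 2 = 0 := Nat.even_iff.mp hpar
    refine ⟨![mkPt m n {XI m 1} {YI n (q+2*β+28)}, mkPt m n {XI m 0} {YI n (q+2*β+29)}],
      ![mkPt m n {XI m 5} {YI n (q+2*β+28)}, mkPt m n {XI m 4} {YI n (q+2*β+29)}],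
      ![mkPt m n {XI m 3} {YI n (q+2*β+28)}, mkPt m n {XI m 2} {YI n (q+2*β+29)}],
      fun t => TptOdd m n q β t.val,
      fun k => UptOdd m n q β k.val,
      ?_, ?_, ?_, ?_, ?_, ?_, ?_, ?_, ?_, ?_, ?_, ?_, ?_, ?_, ?_, ?_⟩
    · intro idx; rcases idx with ⟨iv, hiv⟩; interval_cases iv <;>
        exact mkPt_valid (Finset.singleton_nonempty _) (Finset.singleton_nonempty _)
    · intro idx; rcases idx with ⟨iv, hiv⟩; interval_cases iv <;>
        exact mkPt_valid (Finset.singleton_nonempty _) (Finset.singleton_nonempty _)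
    · intro idx; rcases idx with ⟨iv, hiv⟩; interval_cases iv <;>
        exact mkPt_valid (Finset.singleton_nonempty _) (Finset.singleton_nonempty _)
    · intro t; exact TptOdd_valid t.val
    · intro k; exact UptOdd_valid k.val
    · intro idx; rcases idx with ⟨iv, hiv⟩; interval_cases iv
      · exact pt_satE₂ (by omega) (by omega) (by omega) (by omega)
      · exact pt_satE₂ (by omega) (by omega) (by omega) (by omega)
    · intro idx; rcases idx with ⟨iv, hiv⟩; interval_cases iv
      · exact pt_satE₃ (by omega) (by omega) (by omega) (by omega)
      · exact pt_satE₃ (by omega) (by omega) (by omega) (by omega)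
    · intro idx; rcases idx with ⟨iv, hiv⟩; interval_cases iv
      · exact pt_satE₁ (by omega) (by omega) (by omega) (by omega)
      · exact pt_satE₁ (by omega) (by omega) (by omega) (by omega)
    · intro idx; rcases idx with ⟨iv, hiv⟩; interval_cases iv
      · exact pt_satE₂ (by omega) (by omega) (by omega) (by omega)
      · exact pt_satE₂ (by omega) (by omega) (by omega) (by omega)
    · intro idx; rcases idx with ⟨iv, hiv⟩; interval_cases iv
      · exact pt_satE₁ (by omega) (by omega) (by omega) (by omega)
      · exact pt_satE₁ (by omega) (by omega) (by omega) (by omega)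
    · intro idx; rcases idx with ⟨iv, hiv⟩; interval_cases iv
      · exact pt_satE₃ (by omega) (by omega) (by omega) (by omega)
      · exact pt_satE₃ (by omega) (by omega) (by omega) (by omega)
    · intro t; exact (TptOdd_sat hn' hm (by have := t.isLt; omega)).1
    · intro t; exact (TptOdd_sat hn' hm (by have := t.isLt; omega)).2.1
    · intro t; exact (TptOdd_sat hn' hm (by have := t.isLt; omega)).2.2
    · intro k; exact UptOdd_satE₄ hn' k.val
    · intro f hb h1 h2 h3 h4 hsP hsR hsS hsT hsU
      have hadm := shape_adm hb h1 h2 h3 h4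
      have hsh : Hsh (q+2*β+28) f := by
        intro μ hμ
        obtain ⟨i, j, e, h1', h2', h3'⟩ := hadm μ hμ
        exact ⟨i, j, e, by omega, by omega, h1'⟩
      have hsP0 : SingularAt f (mkPt m n {XI m 1} {YI n (q+2*β+28)}) := hsP 0
      have hsP1 : SingularAt f (mkPt m n {XI m 0} {YI n (q+2*β+29)}) := hsP 1
      have hsR0 : SingularAt f (mkPt m n {XI m 5} {YI n (q+2*β+28)}) := hsR 0
      have hsR1 : SingularAt f (mkPt m n {XI m 4} {YI n (q+2*β+29)}) := hsR 1
      have hsS0 : SingularAt f (mkPt m n {XI m 3} {YI n (q+2*β+28)}) := hsS 0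
      have hsS1 : SingularAt f (mkPt m n {XI m 2} {YI n (q+2*β+29)}) := hsS 1
      have hP0 : ∀ j, coeff (shF (XI m 1) (YI n j) (YI n (q+2*β+28))) f = 0 :=
        fun j => cond11 hsh _ _ hsP0 (YI n j)
      have hP1 : ∀ j, coeff (shF (XI m 0) (YI n j) (YI n (q+2*β+29))) f = 0 :=
        fun j => cond11 hsh _ _ hsP1 (YI n j)
      have hS0 : ∀ j, coeff (shF (XI m 3) (YI n j) (YI n (q+2*β+28))) f = 0 :=
        fun j => cond11 hsh _ _ hsS0 (YI n j)
      have hS1 : ∀ j, coeff (shF (XI m 2) (YI n j) (YI n (q+2*β+29))) f = 0 :=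
        fun j => cond11 hsh _ _ hsS1 (YI n j)
      have hR0 : ∀ j, coeff (shF (XI m 5) (YI n j) (YI n (q+2*β+28))) f = 0 :=
        fun j => cond11 hsh _ _ hsR0 (YI n j)
      have hR1 : ∀ j, coeff (shF (XI m 4) (YI n j) (YI n (q+2*β+29))) f = 0 :=
        fun j => cond11 hsh _ _ hsR1 (YI n j)
      have hT' : ∀ t, t < m - 5 → ∀ j,
          coeff (shF (XI m (6+t)) (YI n j)
            (YI n (if t % 2 = 0 then q+2*β+28 else q+2*β+29))) f = 0 := by
        intro t ht j
        have hs : SingularAt f (TptOdd m n q β t) := hsT ⟨t, ht⟩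
        rw [TptOdd] at hs
        exact cond11 hsh _ _ hs (YI n j)
      have hUA : ∀ w, w < 24 → ∀ e, (e = q+2*β+28 ∨ e = q+2*β+29) →
          coeff (shF (XI m 0) (YI n (q+2*β+w)) (YI n e)) f
            + coeff (shF (XI m 1) (YI n (q+2*β+w)) (YI n e)) f = 0 := by
        intro w hw e he
        have hs : SingularAt f (UptOdd m n q β w) := hsU ⟨w, by omega⟩
        rw [UptOdd_eq1 hw] at hs
        have h := cond21 hsh (XI_ne (by omega) (by omega) (by omega))
          (YI n (q+2*β+w)) hs (YI n e)
        rwa [shF_swap (XI m 0) (YI n e) (YI n (q+2*β+w)),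
            shF_swap (XI m 1) (YI n e) (YI n (q+2*β+w))] at h
      have hUB : ∀ w, w < 24+β → ∀ e, (e = q+2*β+28 ∨ e = q+2*β+29) →
          coeff (shF (XI m 2) (YI n (q+β+w)) (YI n e)) f
            + coeff (shF (XI m 3) (YI n (q+β+w)) (YI n e)) f = 0 := by
        intro w hw e he
        have hs : SingularAt f (UptOdd m n q β (24+w)) := hsU ⟨24+w, by omega⟩
        rw [UptOdd_eq2 hw] at hs
        have h := cond21 hsh (XI_ne (by omega) (by omega) (by omega))
          (YI n (q+β+w)) hs (YI n e)
        rwa [shF_swap (XI m 2) (YI n e) (YI n (q+β+w)),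
            shF_swap (XI m 3) (YI n e) (YI n (q+β+w))] at h
      have hUC : ∀ w, w < β → ∀ e, (e = q+2*β+28 ∨ e = q+2*β+29) →
          coeff (shF (XI m 4) (YI n (q+w)) (YI n e)) f
            + coeff (shF (XI m 5) (YI n (q+w)) (YI n e)) f = 0 := by
        intro w hw e he
        have hs : SingularAt f (UptOdd m n q β (48+β+w)) := hsU ⟨48+β+w, by omega⟩
        rw [UptOdd_eq3 hw] at hs
        have h := cond21 hsh (XI_ne (by omega) (by omega) (by omega))
          (YI n (q+w)) hs (YI n e)
        rwa [shF_swap (XI m 4) (YI n e) (YI n (q+w)),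
            shF_swap (XI m 5) (YI n e) (YI n (q+w))] at h
      have hUC' : ∀ w, w < 24 → ∀ e, (e = q+2*β+28 ∨ e = q+2*β+29) →
          coeff (shF (XI m 4) (YI n (q+2*β+w)) (YI n e)) f
            + coeff (shF (XI m 5) (YI n (q+2*β+w)) (YI n e)) f = 0 := by
        intro w hw e he
        have hs : SingularAt f (UptOdd m n q β (48+2*β+w)) := hsU ⟨48+2*β+w, by omega⟩
        rw [UptOdd_eq4 hw] at hs
        have h := cond21 hsh (XI_ne (by omega) (by omega) (by omega))
          (YI n (q+2*β+w)) hs (YI n e)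
        rwa [shF_swap (XI m 4) (YI n e) (YI n (q+2*β+w)),
            shF_swap (XI m 5) (YI n e) (YI n (q+2*β+w))] at h
      have hUD : ∀ t, t < (m-5)/2 → ∀ w, w < 24 → ∀ e, (e = q+2*β+28 ∨ e = q+2*β+29) →
          coeff (shF (XI m (6+2*t)) (YI n (q+2*β+w)) (YI n e)) f
            + coeff (shF (XI m (7+2*t)) (YI n (q+2*β+w)) (YI n e)) f = 0 := by
        intro t ht w hw e he
        have hs : SingularAt f (UptOdd m n q β (72+2*β+(24*t+w))) :=
          hsU ⟨72+2*β+(24*t+w), by omega⟩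
        rw [UptOdd_eq5 hw] at hs
        have h := cond21 hsh (XI_ne (by omega) (by omega) (by omega))
          (YI n (q+2*β+w)) hs (YI n e)
        rwa [shF_swap (XI m (6+2*t)) (YI n e) (YI n (q+2*β+w)),
            shF_swap (XI m (7+2*t)) (YI n e) (YI n (q+2*β+w))] at h
      have hkill := killOdd q β m
        (fun a jj ee => coeff (shF (XI m a) (YI n jj) (YI n ee)) f)
        hpar' hm hP0 hP1 hS0 hS1 hR0 hR1 hT' hUA hUB hUC hUC' hUD
      apply MvPolynomial.ext
      intro μ
      rw [coeff_zero]
      by_cases hμ : μ ∈ f.support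
      · obtain ⟨i, j, e, rfl, he, hj⟩ := hadm μ hμ
        have him := i.isLt
        have hjm := j.isLt
        have hem := e.isLt
        have hieq : i = XI m (i:ℕ) := Fin.ext (XI_val (by omega)).symm
        have hjeq : j = YI n (j:ℕ) := Fin.ext (YI_val (by omega)).symm
        have heeq : e = YI n (e:ℕ) := Fin.ext (YI_val (by omega)).symm
        rw [hieq, hjeq, heeq]
        exact hkill _ _ _ (by omega) he hj
      · exact MvPolynomial.notMem_support_iff.mp hμ
  · -- `m - 5` odd
    have hpar' : (m - 5) % 2 = 1 := Nat.odd_iff.mp hpar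
    refine ⟨![mkPt m n {XI m 1} {YI n (q+2*β+28)}, mkPt m n {XI m 0} {YI n (q+2*β+29)}],
      ![mkPt m n {XI m 5} {YI n (q+2*β+28)}, mkPt m n {XI m 4} {YI n (q+2*β+29)}],
      ![mkPt m n {XI m 3} {YI n (q+2*β+28)}, mkPt m n {XI m 2} {YI n (q+2*β+29)}],
      fun t => TptEven m n q β t.val,
      fun k => UptEven m n q β k.val,
      ?_, ?_, ?_, ?_, ?_, ?_, ?_, ?_, ?_, ?_, ?_, ?_, ?_, ?_, ?_, ?_⟩
    · intro idx; rcases idx with ⟨iv, hiv⟩; interval_cases iv <;>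
        exact mkPt_valid (Finset.singleton_nonempty _) (Finset.singleton_nonempty _)
    · intro idx; rcases idx with ⟨iv, hiv⟩; interval_cases iv <;>
        exact mkPt_valid (Finset.singleton_nonempty _) (Finset.singleton_nonempty _)
    · intro idx; rcases idx with ⟨iv, hiv⟩; interval_cases iv <;>
        exact mkPt_valid (Finset.singleton_nonempty _) (Finset.singleton_nonempty _)
    · intro t; exact TptEven_valid t.val
    · intro k; exact UptEven_valid k.val
    · intro idx; rcases idx with ⟨iv, hiv⟩; interval_cases iv
      · exact pt_satE₂ (by omega) (by omega) (by omega) (by omega)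
      · exact pt_satE₂ (by omega) (by omega) (by omega) (by omega)
    · intro idx; rcases idx with ⟨iv, hiv⟩; interval_cases iv
      · exact pt_satE₃ (by omega) (by omega) (by omega) (by omega)
      · exact pt_satE₃ (by omega) (by omega) (by omega) (by omega)
    · intro idx; rcases idx with ⟨iv, hiv⟩; interval_cases iv
      · exact pt_satE₁ (by omega) (by omega) (by omega) (by omega)
      · exact pt_satE₁ (by omega) (by omega) (by omega) (by omega)
    · intro idx; rcases idx with ⟨iv, hiv⟩; interval_cases iv
      · exact pt_satE₂ (by omega) (by omega) (by omega) (by omega)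
      · exact pt_satE₂ (by omega) (by omega) (by omega) (by omega)
    · intro idx; rcases idx with ⟨iv, hiv⟩; interval_cases iv
      · exact pt_satE₁ (by omega) (by omega) (by omega) (by omega)
      · exact pt_satE₁ (by omega) (by omega) (by omega) (by omega)
    · intro idx; rcases idx with ⟨iv, hiv⟩; interval_cases iv
      · exact pt_satE₃ (by omega) (by omega) (by omega) (by omega)
      · exact pt_satE₃ (by omega) (by omega) (by omega) (by omega)
    · intro t; exact (TptEven_sat hn' hm t.isLt).1
    · intro t; exact (TptEven_sat hn' hm t.isLt).2.1
    · intro t; exact (TptEven_sat hn' hm t.isLt).2.2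
    · intro k; exact UptEven_satE₄ hn' k.val
    · intro f hb h1 h2 h3 h4 hsP hsR hsS hsT hsU
      have hadm := shape_adm hb h1 h2 h3 h4
      have hsh : Hsh (q+2*β+28) f := by
        intro μ hμ
        obtain ⟨i, j, e, h1', h2', h3'⟩ := hadm μ hμ
        exact ⟨i, j, e, by omega, by omega, h1'⟩
      have hsP0 : SingularAt f (mkPt m n {XI m 1} {YI n (q+2*β+28)}) := hsP 0
      have hsP1 : SingularAt f (mkPt m n {XI m 0} {YI n (q+2*β+29)}) := hsP 1
      have hsR0 : SingularAt f (mkPt m n {XI m 5} {YI n (q+2*β+28)}) := hsR 0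
      have hsR1 : SingularAt f (mkPt m n {XI m 4} {YI n (q+2*β+29)}) := hsR 1
      have hsS0 : SingularAt f (mkPt m n {XI m 3} {YI n (q+2*β+28)}) := hsS 0
      have hsS1 : SingularAt f (mkPt m n {XI m 2} {YI n (q+2*β+29)}) := hsS 1
      have hP0 : ∀ j, coeff (shF (XI m 1) (YI n j) (YI n (q+2*β+28))) f = 0 :=
        fun j => cond11 hsh _ _ hsP0 (YI n j)
      have hP1 : ∀ j, coeff (shF (XI m 0) (YI n j) (YI n (q+2*β+29))) f = 0 :=
        fun j => cond11 hsh _ _ hsP1 (YI n j)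
      have hS0 : ∀ j, coeff (shF (XI m 3) (YI n j) (YI n (q+2*β+28))) f = 0 :=
        fun j => cond11 hsh _ _ hsS0 (YI n j)
      have hS1 : ∀ j, coeff (shF (XI m 2) (YI n j) (YI n (q+2*β+29))) f = 0 :=
        fun j => cond11 hsh _ _ hsS1 (YI n j)
      have hR0 : ∀ j, coeff (shF (XI m 5) (YI n j) (YI n (q+2*β+28))) f = 0 :=
        fun j => cond11 hsh _ _ hsR0 (YI n j)
      have hR1 : ∀ j, coeff (shF (XI m 4) (YI n j) (YI n (q+2*β+29))) f = 0 :=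
        fun j => cond11 hsh _ _ hsR1 (YI n j)
      have hT' : ∀ t, t < m - 6 → ∀ j,
          coeff (shF (XI m (6+t)) (YI n j)
            (YI n (if t % 2 = 0 then q+2*β+28 else q+2*β+29))) f = 0 := by
        intro t ht j
        have hs : SingularAt f (TptEven m n q β t) := hsT ⟨t, by omega⟩
        rw [TptEven, if_neg (by omega), TptOdd] at hs
        exact cond11 hsh _ _ hs (YI n j)
      have hTs : ∀ j, coeff (shF (XI m m) (YI n j) (YI n (q+2*β+28))) f
          + coeff (shF (XI m m) (YI n j) (YI n (q+2*β+29))) f = 0 := by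
        intro j
        have hs : SingularAt f (TptEven m n q β (m-6)) := hsT ⟨m-6, by omega⟩
        rw [TptEven, if_pos rfl] at hs
        exact cond12 hsh (XI m m) (YI_ne (by omega) (by omega) (by omega)) hs (YI n j)
      have hU1 : ∀ s, s < 12 → ∀ e, (e = q+2*β+28 ∨ e = q+2*β+29) →
          coeff (shF (XI m 0) (YI n (q+2*β+2*s)) (YI n e)) f
            + coeff (shF (XI m m) (YI n (q+2*β+2*s)) (YI n e)) f = 0 := by
        intro s hs' e he
        have hs : SingularAt f (UptEven m n q β (3*s)) := hsU ⟨3*s, by omega⟩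
        rw [UptEven_eq1a hs'] at hs
        have h := cond21 hsh (XI_ne (by omega) (by omega) (by omega))
          (YI n (q+2*β+2*s)) hs (YI n e)
        rwa [shF_swap (XI m 0) (YI n e) (YI n (q+2*β+2*s)),
            shF_swap (XI m m) (YI n e) (YI n (q+2*β+2*s))] at h
      have hU2 : ∀ s, s < 12 → ∀ e, (e = q+2*β+28 ∨ e = q+2*β+29) →
          coeff (shF (XI m 1) (YI n (q+2*β+(2*s+1))) (YI n e)) f
            + coeff (shF (XI m m) (YI n (q+2*β+(2*s+1))) (YI n e)) f = 0 := by
        intro s hs' e he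
        have hs : SingularAt f (UptEven m n q β (3*s+1)) := hsU ⟨3*s+1, by omega⟩
        rw [UptEven_eq1b hs'] at hs
        have h := cond21 hsh (XI_ne (by omega) (by omega) (by omega))
          (YI n (q+2*β+(2*s+1))) hs (YI n e)
        rwa [shF_swap (XI m 1) (YI n e) (YI n (q+2*β+(2*s+1))),
            shF_swap (XI m m) (YI n e) (YI n (q+2*β+(2*s+1)))] at h
      have hU3 : ∀ s, s < 12 → ∀ e, (e = q+2*β+28 ∨ e = q+2*β+29) →
          (coeff (shF (XI m 0) (YI n (q+2*β+2*s)) (YI n e)) f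
            + coeff (shF (XI m 0) (YI n (q+2*β+(2*s+1))) (YI n e)) f)
          + (coeff (shF (XI m 1) (YI n (q+2*β+2*s)) (YI n e)) f
            + coeff (shF (XI m 1) (YI n (q+2*β+(2*s+1))) (YI n e)) f) = 0 := by
        intro s hs' e he
        have hs : SingularAt f (UptEven m n q β (3*s+2)) := hsU ⟨3*s+2, by omega⟩
        rw [UptEven_eq1c hs'] at hs
        have h := cond22 hsh (XI_ne (by omega) (by omega) (by omega))
          (YI_ne (by omega) (by omega) (by omega)) hs (YI n e)
        rwa [shF_swap (XI m 0) (YI n e) (YI n (q+2*β+2*s)),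
            shF_swap (XI m 0) (YI n e) (YI n (q+2*β+(2*s+1))),
            shF_swap (XI m 1) (YI n e) (YI n (q+2*β+2*s)),
            shF_swap (XI m 1) (YI n e) (YI n (q+2*β+(2*s+1)))] at h
      have hUB : ∀ w, w < 24+β → ∀ e, (e = q+2*β+28 ∨ e = q+2*β+29) →
          coeff (shF (XI m 2) (YI n (q+β+w)) (YI n e)) f
            + coeff (shF (XI m 3) (YI n (q+β+w)) (YI n e)) f = 0 := by
        intro w hw e he
        have hs : SingularAt f (UptEven m n q β (36+w)) := hsU ⟨36+w, by omega⟩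
        rw [UptEven_eq2 hw] at hs
        have h := cond21 hsh (XI_ne (by omega) (by omega) (by omega))
          (YI n (q+β+w)) hs (YI n e)
        rwa [shF_swap (XI m 2) (YI n e) (YI n (q+β+w)),
            shF_swap (XI m 3) (YI n e) (YI n (q+β+w))] at h
      have hUC : ∀ w, w < β → ∀ e, (e = q+2*β+28 ∨ e = q+2*β+29) →
          coeff (shF (XI m 4) (YI n (q+w)) (YI n e)) f
            + coeff (shF (XI m 5) (YI n (q+w)) (YI n e)) f = 0 := by
        intro w hw e he
        have hs : SingularAt f (UptEven m n q β (60+β+w)) := hsU ⟨60+β+w, by omega⟩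
        rw [UptEven_eq3 hw] at hs
        have h := cond21 hsh (XI_ne (by omega) (by omega) (by omega))
          (YI n (q+w)) hs (YI n e)
        rwa [shF_swap (XI m 4) (YI n e) (YI n (q+w)),
            shF_swap (XI m 5) (YI n e) (YI n (q+w))] at h
      have hUC' : ∀ w, w < 24 → ∀ e, (e = q+2*β+28 ∨ e = q+2*β+29) →
          coeff (shF (XI m 4) (YI n (q+2*β+w)) (YI n e)) f
            + coeff (shF (XI m 5) (YI n (q+2*β+w)) (YI n e)) f = 0 := by
        intro w hw e he
        have hs : SingularAt f (UptEven m n q β (60+2*β+w)) := hsU ⟨60+2*β+w, by omega⟩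
        rw [UptEven_eq4 hw] at hs
        have h := cond21 hsh (XI_ne (by omega) (by omega) (by omega))
          (YI n (q+2*β+w)) hs (YI n e)
        rwa [shF_swap (XI m 4) (YI n e) (YI n (q+2*β+w)),
            shF_swap (XI m 5) (YI n e) (YI n (q+2*β+w))] at h
      have hUD : ∀ t, t < (m-6)/2 → ∀ w, w < 24 → ∀ e, (e = q+2*β+28 ∨ e = q+2*β+29) →
          coeff (shF (XI m (6+2*t)) (YI n (q+2*β+w)) (YI n e)) f
            + coeff (shF (XI m (7+2*t)) (YI n (q+2*β+w)) (YI n e)) f = 0 := by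
        intro t ht w hw e he
        have hs : SingularAt f (UptEven m n q β (84+2*β+(24*t+w))) :=
          hsU ⟨84+2*β+(24*t+w), by omega⟩
        rw [UptEven_eq5 hw] at hs
        have h := cond21 hsh (XI_ne (by omega) (by omega) (by omega))
          (YI n (q+2*β+w)) hs (YI n e)
        rwa [shF_swap (XI m (6+2*t)) (YI n e) (YI n (q+2*β+w)),
            shF_swap (XI m (7+2*t)) (YI n e) (YI n (q+2*β+w))] at h
      have hkill := killEven q β m
        (fun a jj ee => coeff (shF (XI m a) (YI n jj) (YI n ee)) f)
        hpar' hm hP0 hP1 hS0 hS1 hR0 hR1 hT' hTs hU1 hU2 hU3 hUB hUC hUC' hUD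
      apply MvPolynomial.ext
      intro μ
      rw [coeff_zero]
      by_cases hμ : μ ∈ f.support
      · obtain ⟨i, j, e, rfl, he, hj⟩ := hadm μ hμ
        have him := i.isLt
        have hjm := j.isLt
        have hem := e.isLt
        have hieq : i = XI m (i:ℕ) := Fin.ext (XI_val (by omega)).symm
        have hjeq : j = YI n (j:ℕ) := Fin.ext (YI_val (by omega)).symm
        have heeq : e = YI n (e:ℕ) := Fin.ext (YI_val (by omega)).symm
        rw [hieq, hjeq, heeq]
        exact hkill _ _ _ (by omega) he hj
      · exact MvPolynomial.notMem_support_iff.mp hμ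
end

section
/- Let m ≥ 8 and n ≥ 3m² − 5m + 2 be integers. Set q = 3m² − 42m + 146 and partition the first 3m² − 6m + 10 indices of the y-variables into consecutive blocks: A of size q; for each t ∈ {2,3,4} a block B_t of size 12m − 72; for each pair {t,t'} ⊆ {2,3,4} a block C_{t,t'} of size 24; for each t ∈ {2,3,4} a block D_t of size 2; and a block D₅ of size 2. Let E₁ = {x₀,x₁} ∪ {y_j : j ∈ A ∪ B₂ ∪ B₃ ∪ B₄ ∪ C₂,₃ ∪ C₂,₄ ∪ C₃,₄}; for t ∈ {2,3,4}, E_t = {x_{2t−2}, x_{2t−1}} ∪ {y_j : j ∈ B_t ∪ (the two blocks C_{t,t'} with t' ≠ t) ∪ D_t}; and E₅ = {y_j : j ∈ D₅}. Then there exist, in (ℂ^{m+1} ∖ {0}) × (ℂ^{n+1} ∖ {0}): 72 points satisfying E₅ = 0, and for each pair {t,t'} ⊆ {2,3,4}, 2 points satisfying E₁ = E_t = E_{t'} = 0, such that the only bidegree (1,2) polynomial f lying simultaneously in the ideals generated by E₁, E₂, E₃, E₄ and E₅, and singular at all chosen points, is f = 0. (This states that the equiabundant configuration E₁(m,n) of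 the paper is non-defective.) -/
open MvPolynomial

/- Blocks of y-indices (consecutive): `A = [0,q)`; `B_t = [q+(t-2)β, q+(t-1)β)` for
`t ∈ {2,3,4}` with `β = 12m - 72`; `C₂₃ = [q+3β, q+3β+24)`, `C₂₄ = [q+3β+24, q+3β+48)`,
`C₃₄ = [q+3β+48, q+3β+72)`; `D_t = [q+3β+72+2(t-2), q+3β+74+2(t-2))` for `t ∈ {2,3,4}`;
`D₅ = [q+3β+78, q+3β+80)`. -/

/-- `E₁ = {x₀,x₁} ∪ {y_j : j ∈ A ∪ B₂ ∪ B₃ ∪ B₄ ∪ C₂₃ ∪ C₂₄ ∪ C₃₄}`. -/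
def E1E₁ (m n q β : ℕ) : Set (SegreVar m n) :=
  xRange m n 0 2 ∪ yRange m n 0 (q + 3 * β + 72)

/-- `E₂ = {x₂,x₃} ∪ {y_j : j ∈ B₂ ∪ C₂₃ ∪ C₂₄ ∪ D₂}`. -/
def E1E₂ (m n q β : ℕ) : Set (SegreVar m n) :=
  xRange m n 2 4 ∪ yRange m n q (q + β) ∪ yRange m n (q + 3 * β) (q + 3 * β + 48)
    ∪ yRange m n (q + 3 * β + 72) (q + 3 * β + 74)

/-- `E₃ = {x₄,x₅} ∪ {y_j : j ∈ B₃ ∪ C₂₃ ∪ C₃₄ ∪ D₃}`. -/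
def E1E₃ (m n q β : ℕ) : Set (SegreVar m n) :=
  xRange m n 4 6 ∪ yRange m n (q + β) (q + 2 * β) ∪ yRange m n (q + 3 * β) (q + 3 * β + 24)
    ∪ yRange m n (q + 3 * β + 48) (q + 3 * β + 72)
    ∪ yRange m n (q + 3 * β + 74) (q + 3 * β + 76)

/-- `E₄ = {x₆,x₇} ∪ {y_j : j ∈ B₄ ∪ C₂₄ ∪ C₃₄ ∪ D₄}`. -/
def E1E₄ (m n q β : ℕ) : Set (SegreVar m n) :=
  xRange m n 6 8 ∪ yRange m n (q + 2 * β) (q + 3 * β)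
    ∪ yRange m n (q + 3 * β + 24) (q + 3 * β + 72)
    ∪ yRange m n (q + 3 * β + 76) (q + 3 * β + 78)

/-- `E₅ = {y_j : j ∈ D₅}`. -/
def E1E₅ (m n q β : ℕ) : Set (SegreVar m n) :=
  yRange m n (q + 3 * β + 78) (q + 3 * β + 80)

/-!
Every monomial of `f` is `x_i y_j y_k`, and since the ideals are generated by variables, each
monomial of `f` contains a variable of every `E_t`. By `E₅` one `y`-index, say `k`, lies in `D₅`,
so `y_k` is in none of `E₂, E₃, E₄`. These three sets have disjoint `x`-variables and a `y`-index
lies in at most two of them, so `j ∈ C_{t,t'}` and `x_i` is one of the two `x`-variables of the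
third set `E_{t''}`.

At a point `(e_a, e_b)` built from standard basis vectors, `∂f/∂y_u` with `u ≠ b` is exactly the
coefficient of `x_a y_u y_b`. Hence the 72 points `(e_{2t''-2}, e_j)`, `j ∈ C_{t,t'}`, kill the
monomials through the even `x`-variable, and the two points `(e_{2t''-1}, e_k)`, `k ∈ D₅`, of
each pair kill those through the odd one.
-/

section Monomials

variable {m n : ℕ}

noncomputable def xyyExp (i : Fin (m + 1)) (j k : Fin (n + 1)) : SegreVar m n →₀ ℕ :=
  Finsupp.single (Sum.inl i) 1 + Finsupp.single (Sum.inr j) 1 + Finsupp.single (Sum.inr k) 1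

lemma xyyExp_comm (i : Fin (m + 1)) (j k : Fin (n + 1)) :
    (xyyExp i j k : SegreVar m n →₀ ℕ) = xyyExp i k j :=
  add_right_comm _ _ _

lemma X_mul_X_mul_X_eq_monomial (i : Fin (m + 1)) (j k : Fin (n + 1)) :
    (X (Sum.inl i) * X (Sum.inr j) * X (Sum.inr k) : MvPolynomial (SegreVar m n) ℂ) =
      monomial (xyyExp i j k) 1 := by
  simp only [X, monomial_mul, mul_one, xyyExp]

lemma eq_of_xyyExp_apply_ne_zero {i : Fin (m + 1)} {j k : Fin (n + 1)} {v : SegreVar m n}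
    (h : xyyExp i j k v ≠ 0) : v = Sum.inl i ∨ v = Sum.inr j ∨ v = Sum.inr k := by
  contrapose! h
  simp [xyyExp, h.1.symm, h.2.1.symm, h.2.2.symm]

lemma exists_xyyExp_of_mem_support {f : MvPolynomial (SegreVar m n) ℂ} (hf : IsBidegree12 f)
    {d : SegreVar m n →₀ ℕ} (hd : d ∈ f.support) : ∃ i j k, d = xyyExp i j k := by
  have hsub : f ∈ restrictSupport ℂ (Set.range fun t : Fin (m + 1) × Fin (n + 1) × Fin (n + 1) =>
      (xyyExp t.1 t.2.1 t.2.2 : SegreVar m n →₀ ℕ)) := by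
    refine Submodule.span_le.mpr ?_ hf
    rintro _ ⟨i, j, k, rfl⟩
    rw [SetLike.mem_coe, X_mul_X_mul_X_eq_monomial, monomial_mem_restrictSupport]
    exact Or.inl ⟨(i, j, k), rfl⟩
  obtain ⟨⟨i, j, k⟩, rfl⟩ := (mem_restrictSupport_iff ℂ).mp hsub hd
  exact ⟨i, j, k, rfl⟩

lemma var_mem_of_mem_varIdeal {E : Set (SegreVar m n)} {f : MvPolynomial (SegreVar m n) ℂ}
    (hf : f ∈ varIdeal m n E) {i : Fin (m + 1)} {j k : Fin (n + 1)}
    (hd : xyyExp i j k ∈ f.support) : Sum.inl i ∈ E ∨ Sum.inr j ∈ E ∨ Sum.inr k ∈ E := by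
  obtain ⟨v, hvE, hv⟩ := mem_ideal_span_X_image.mp hf _ hd
  rcases eq_of_xyyExp_apply_ne_zero hv with rfl | rfl | rfl <;> simp [hvE]

@[simp] lemma inl_mem_xRange {a b : ℕ} {i : Fin (m + 1)} :
    (Sum.inl i : SegreVar m n) ∈ xRange m n a b ↔ a ≤ i ∧ (i : ℕ) < b := by
  simp [xRange]

@[simp] lemma inr_notMem_xRange {a b : ℕ} {j : Fin (n + 1)} :
    (Sum.inr j : SegreVar m n) ∉ xRange m n a b := by
  simp [xRange]

@[simp] lemma inl_notMem_yRange {a b : ℕ} {i : Fin (m + 1)} :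
    (Sum.inl i : SegreVar m n) ∉ yRange m n a b := by
  simp [yRange]

@[simp] lemma inr_mem_yRange {a b : ℕ} {j : Fin (n + 1)} :
    (Sum.inr j : SegreVar m n) ∈ yRange m n a b ↔ a ≤ j ∧ (j : ℕ) < b := by
  simp [yRange]

def basisPt (a : Fin (m + 1)) (b : Fin (n + 1)) : SegrePt m n :=
  (Pi.single a 1, Pi.single b 1)

lemma validPt_basisPt (a : Fin (m + 1)) (b : Fin (n + 1)) : ValidPt (basisPt a b) :=
  ⟨fun h => by simpa [basisPt] using congrFun h a, fun h => by simpa [basisPt] using congrFun h b⟩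

lemma satisfiesEqs_basisPt_iff {a : Fin (m + 1)} {b : Fin (n + 1)} {E : Set (SegreVar m n)} :
    SatisfiesEqs (basisPt a b) E ↔ Sum.inl a ∉ E ∧ Sum.inr b ∉ E := by
  constructor
  · intro h
    exact ⟨fun ha => by simpa [ptFun, basisPt] using h _ ha,
      fun hb => by simpa [ptFun, basisPt] using h _ hb⟩
  · rintro ⟨ha, hb⟩ (v | v) hv
    · simp only [ptFun, basisPt, Sum.elim_inl, Pi.single_apply]
      exact if_neg fun h : v = a => ha (h ▸ hv)
    · simp only [ptFun, basisPt, Sum.elim_inr, Pi.single_apply]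
      exact if_neg fun h : v = b => hb (h ▸ hv)

lemma xyyExp_eq_xyyExp_iff {i a : Fin (m + 1)} {j k u b : Fin (n + 1)} :
    (xyyExp i j k : SegreVar m n →₀ ℕ) = xyyExp a u b ↔
      i = a ∧ (j = u ∧ k = b ∨ j = b ∧ k = u) := by
  constructor
  · intro h
    obtain rfl : i = a := by
      simpa [xyyExp, Finsupp.single_apply] using DFunLike.congr_fun h (Sum.inl a)
    rw [xyyExp, xyyExp, add_assoc, add_assoc, add_right_inj,
      Finsupp.single_add_single_eq_single_add_single (M := ℕ) one_ne_zero one_ne_zero] at h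
    simpa using h
  · rintro ⟨rfl, ⟨rfl, rfl⟩ | ⟨rfl, rfl⟩⟩
    · rfl
    · exact xyyExp_comm _ _ _

lemma eval_pderiv_X_mul_X_mul_X (g : SegreVar m n → ℂ) (i : Fin (m + 1)) (u j k : Fin (n + 1)) :
    eval g (pderiv (Sum.inr u) (X (Sum.inl i) * X (Sum.inr j) * X (Sum.inr k))) =
      (if j = u then g (Sum.inl i) * g (Sum.inr k) else 0) +
        (if k = u then g (Sum.inl i) * g (Sum.inr j) else 0) := by
  simp only [Derivation.leibniz, pderiv_X, Pi.single_apply, Sum.inr.injEq, reduceCtorEq, smul_eq_mul,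
    mul_ite, mul_one, mul_zero, if_false, add_zero, map_add, apply_ite (eval g), map_mul, eval_X,
    map_zero]
  split_ifs <;> ring

lemma eval_basisPt_pderiv_eq_coeff {f : MvPolynomial (SegreVar m n) ℂ} (hf : IsBidegree12 f)
    (a : Fin (m + 1)) {u b : Fin (n + 1)} (hub : u ≠ b) :
    eval (ptFun (basisPt a b)) (pderiv (Sum.inr u) f) = coeff (xyyExp a u b) f := by
  induction hf using Submodule.span_induction with
  | mem g hg =>
    obtain ⟨i, j, k, rfl⟩ := hg
    rw [eval_pderiv_X_mul_X_mul_X, X_mul_X_mul_X_eq_monomial, coeff_monomial]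
    simp only [xyyExp_eq_xyyExp_iff, ptFun, basisPt, Sum.elim_inl, Sum.elim_inr, Pi.single_apply]
    split_ifs <;> simp_all
  | zero => simp
  | add f g _ _ hf hg => simp [hf, hg]
  | smul c f _ hf => simp [hf]

lemma coeff_eq_zero_of_singularAt_basisPt {f : MvPolynomial (SegreVar m n) ℂ} (hf : IsBidegree12 f)
    {a : Fin (m + 1)} {u b : Fin (n + 1)} (hs : SingularAt f (basisPt a b)) (hub : u ≠ b) :
    coeff (xyyExp a u b) f = 0 :=
  (eval_basisPt_pderiv_eq_coeff hf a hub).symm.trans (hs _)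

end Monomials

namespace E1

variable {m n q β : ℕ} {f : MvPolynomial (SegreVar m n) ℂ}

/- The blocks `C₂₃, C₂₄, C₃₄` of 24 indices each start at `q + 3β`; the block of `j` leaves out
`E₄, E₃, E₂` respectively, whose `x`-variables are `x₆, x₇`, `x₄, x₅`, `x₂, x₃`. -/
lemma index_constraints_of_mem_support
    (h₂ : f ∈ varIdeal m n (E1E₂ m n q β)) (h₃ : f ∈ varIdeal m n (E1E₃ m n q β))
    (h₄ : f ∈ varIdeal m n (E1E₄ m n q β)) {i : Fin (m + 1)} {j k : Fin (n + 1)}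
    (hd : xyyExp i j k ∈ f.support) (hk : q + 3 * β + 78 ≤ k ∧ (k : ℕ) < q + 3 * β + 80) :
    q + 3 * β ≤ j ∧ (j : ℕ) < q + 3 * β + 72 ∧
      ((i : ℕ) = 6 - 2 * ((j - (q + 3 * β)) / 24) ∨ (i : ℕ) = 7 - 2 * ((j - (q + 3 * β)) / 24)) := by
  have c₂ := var_mem_of_mem_varIdeal h₂ hd
  have c₃ := var_mem_of_mem_varIdeal h₃ hd
  have c₄ := var_mem_of_mem_varIdeal h₄ hd
  simp only [E1E₂, E1E₃, E1E₄, Set.mem_union, inl_mem_xRange, inr_mem_yRange, inl_notMem_yRange,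
    inr_notMem_xRange, or_false, false_or] at c₂ c₃ c₄
  omega

lemma eq_zero_of_singularAt_basisPt (hf : IsBidegree12 f)
    (h₂ : f ∈ varIdeal m n (E1E₂ m n q β)) (h₃ : f ∈ varIdeal m n (E1E₃ m n q β))
    (h₄ : f ∈ varIdeal m n (E1E₄ m n q β)) (h₅ : f ∈ varIdeal m n (E1E₅ m n q β))
    (hC : ∀ (i : Fin (m + 1)) (j : Fin (n + 1)), q + 3 * β ≤ j → (j : ℕ) < q + 3 * β + 72 →
      (i : ℕ) = 6 - 2 * ((j - (q + 3 * β)) / 24) → SingularAt f (basisPt i j))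
    (hD : ∀ (i : Fin (m + 1)) (k : Fin (n + 1)), q + 3 * β + 78 ≤ k → (k : ℕ) < q + 3 * β + 80 →
      ((i : ℕ) = 3 ∨ (i : ℕ) = 5 ∨ (i : ℕ) = 7) → SingularAt f (basisPt i k)) :
    f = 0 := by
  have hD₅ : ∀ i j k, xyyExp i j k ∈ f.support → q + 3 * β + 78 ≤ k ∧ (k : ℕ) < q + 3 * β + 80 →
      coeff (xyyExp i j k) f = 0 := by
    intro i j k hd hk
    obtain ⟨hj₁, hj₂, hi | hi⟩ := index_constraints_of_mem_support h₂ h₃ h₄ hd hk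
    · rw [xyyExp_comm]
      exact coeff_eq_zero_of_singularAt_basisPt hf (hC i j hj₁ hj₂ hi) (Fin.ne_of_val_ne (by omega))
    · exact coeff_eq_zero_of_singularAt_basisPt hf (hD i k hk.1 hk.2 (by omega))
        (Fin.ne_of_val_ne (by omega))
  ext d
  rw [coeff_zero]
  by_cases hd : d ∈ f.support
  swap
  · exact notMem_support_iff.mp hd
  obtain ⟨i, j, k, rfl⟩ := exists_xyyExp_of_mem_support hf hd
  have c₅ := var_mem_of_mem_varIdeal h₅ hd
  simp only [E1E₅, inl_notMem_yRange, inr_mem_yRange, false_or] at c₅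
  rcases c₅ with hj | hk
  · rw [xyyExp_comm] at hd ⊢
    exact hD₅ i k j hd hj
  · exact hD₅ i j k hd hk

end E1

/-- The equiabundant configuration `E₁(m,n)` is non-defective for `m ≥ 8` and
`n ≥ 3m² - 5m + 2`. -/
theorem statement13 (m n : ℕ) (hm : 8 ≤ m)
    (hn : 3 * (m : ℤ) ^ 2 - 5 * m + 2 ≤ (n : ℤ))
    (q β : ℕ)
    (hq : (q : ℤ) = 3 * (m : ℤ) ^ 2 - 42 * m + 146)
    (hβ : (β : ℤ) = 12 * (m : ℤ) - 72) :
    ∃ (P : Fin 72 → SegrePt m n)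
      (T₂₃ : Fin 2 → SegrePt m n) (T₂₄ : Fin 2 → SegrePt m n) (T₃₄ : Fin 2 → SegrePt m n),
      (∀ i, ValidPt (P i)) ∧
      (∀ i, ValidPt (T₂₃ i)) ∧ (∀ i, ValidPt (T₂₄ i)) ∧ (∀ i, ValidPt (T₃₄ i)) ∧
      (∀ i, SatisfiesEqs (P i) (E1E₅ m n q β)) ∧
      (∀ i, SatisfiesEqs (T₂₃ i) (E1E₁ m n q β)) ∧ (∀ i, SatisfiesEqs (T₂₃ i) (E1E₂ m n q β)) ∧
        (∀ i, SatisfiesEqs (T₂₃ i) (E1E₃ m n q β)) ∧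
      (∀ i, SatisfiesEqs (T₂₄ i) (E1E₁ m n q β)) ∧ (∀ i, SatisfiesEqs (T₂₄ i) (E1E₂ m n q β)) ∧
        (∀ i, SatisfiesEqs (T₂₄ i) (E1E₄ m n q β)) ∧
      (∀ i, SatisfiesEqs (T₃₄ i) (E1E₁ m n q β)) ∧ (∀ i, SatisfiesEqs (T₃₄ i) (E1E₃ m n q β)) ∧
        (∀ i, SatisfiesEqs (T₃₄ i) (E1E₄ m n q β)) ∧
      ∀ f : MvPolynomial (SegreVar m n) ℂ,
        IsBidegree12 f →
        f ∈ varIdeal m n (E1E₁ m n q β) →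
        f ∈ varIdeal m n (E1E₂ m n q β) →
        f ∈ varIdeal m n (E1E₃ m n q β) →
        f ∈ varIdeal m n (E1E₄ m n q β) →
        f ∈ varIdeal m n (E1E₅ m n q β) →
        (∀ i, SingularAt f (P i)) →
        (∀ i, SingularAt f (T₂₃ i)) → (∀ i, SingularAt f (T₂₄ i)) →
        (∀ i, SingularAt f (T₃₄ i)) → f = 0 := by
  have hQn : q + 3 * β + 80 ≤ n := by
    have : (8 : ℤ) ≤ m := by exact_mod_cast hm
    zify
    linarith
  refine ⟨fun t => basisPt ⟨6 - 2 * (t / 24), by omega⟩ ⟨q + 3 * β + t, by omega⟩,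
    fun s => basisPt ⟨7, by omega⟩ ⟨q + 3 * β + 78 + s, by omega⟩,
    fun s => basisPt ⟨5, by omega⟩ ⟨q + 3 * β + 78 + s, by omega⟩,
    fun s => basisPt ⟨3, by omega⟩ ⟨q + 3 * β + 78 + s, by omega⟩,
    fun _ => validPt_basisPt _ _, fun _ => validPt_basisPt _ _, fun _ => validPt_basisPt _ _,
    fun _ => validPt_basisPt _ _, ?_, ?_, ?_, ?_, ?_, ?_, ?_, ?_, ?_, ?_,
    fun f hf _ h₂ h₃ h₄ h₅ hP h₂₃ h₂₄ h₃₄ => E1.eq_zero_of_singularAt_basisPt hf h₂ h₃ h₄ h₅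
      (fun i j hj₁ hj₂ hi => ?blockC) (fun i k hk₁ hk₂ hi => ?blockD)⟩
  case blockC =>
    convert hP ⟨j - (q + 3 * β), by omega⟩ using 2 <;> simp only [Fin.ext_iff] <;> omega
  case blockD =>
    rcases hi with hi | hi | hi
    · convert h₃₄ ⟨k - (q + 3 * β + 78), by omega⟩ using 2 <;> simp only [Fin.ext_iff] <;> omega
    · convert h₂₄ ⟨k - (q + 3 * β + 78), by omega⟩ using 2 <;> simp only [Fin.ext_iff] <;> omega
    · convert h₂₃ ⟨k - (q + 3 * β + 78), by omega⟩ using 2 <;> simp only [Fin.ext_iff] <;> omega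
  all_goals
    intro t
    simp only [satisfiesEqs_basisPt_iff, E1E₁, E1E₂, E1E₃, E1E₄, E1E₅, Set.mem_union,
      inl_mem_xRange, inr_mem_yRange, inl_notMem_yRange, inr_notMem_xRange, or_false, false_or,
      not_false_eq_true, true_and]
    omega
end

section
/- Let k ≥ 1 and let E₁,…,E_k be sets of variables among x₀,…,x_m,y₀,…,y_n. Let f ∈ ℂ[x₀,…,x_m,y₀,…,y_n] be a monomial such that for every t ∈ {1,…,k}, f is divisible by some variable in E_t. Let I be a nonempty subset of {1,…,k} such that the intersection ⋂_{t∈I} E_t is empty. Then for every point P = (a,b) ∈ ℂ^{m+1} × ℂ^{n+1} satisfying the equations E_t = 0 for every t ∈ I, and for every variable z among x₀,…,x_m,y₀,…,y_n, the partial derivative ∂f/∂z vanishes when evaluated at (a,b). (This is the lemma showing that irrelevant points impose no conditions: points constrained to an intersection of coordinate subvarieties sharing no common coordinate equation contribute nothing to the ideal of a coordinate configuration.) -/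
open MvPolynomial

/-- Irrelevant points impose no conditions: if a monomial `f` vanishes on each of the
coordinate subvarieties `{E_t = 0}`, and the subvarieties indexed by a nonempty `I` share no
common coordinate equation, then every partial derivative of `f` vanishes at every point
constrained to the intersection of the subvarieties indexed by `I`. -/
theorem statement19 (m n k : ℕ) (hk : 1 ≤ k)
    (E : Fin k → Set (SegreVar m n))
    (f : MvPolynomial (SegreVar m n) ℂ)
    (hf : ∃ (d : SegreVar m n →₀ ℕ) (c : ℂ), f = monomial d c)
    (hdiv : ∀ t : Fin k, ∃ v ∈ E t, (X v : MvPolynomial (SegreVar m n) ℂ) ∣ f)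
    (I : Set (Fin k)) (hI : I.Nonempty) (hIE : (⋂ t ∈ I, E t) = ∅)
    (P : SegrePt m n) (hP : ∀ t ∈ I, SatisfiesEqs P (E t)) :
    ∀ z : SegreVar m n, eval (ptFun P) (pderiv z f) = 0 := by
  intro z
  obtain ⟨d, c, rfl⟩ := hf
  rcases eq_or_ne c 0 with rfl | hc
  · simp
  -- find t ∈ I with z ∉ E t
  have hz : ∃ t ∈ I, z ∉ E t := by
    by_contra h
    push_neg at h
    have : z ∈ (⋂ t ∈ I, E t) := Set.mem_biInter h
    rw [hIE] at this
    exact this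
  obtain ⟨t, htI, htz⟩ := hz
  obtain ⟨v, hvE, hvdvd⟩ := hdiv t
  have hvz : v ≠ z := fun h => htz (h ▸ hvE)
  have hdv : d v ≠ 0 := by
    rcases (X_dvd_monomial.mp hvdvd) with h | h
    · exact absurd h hc
    · exact h
  have hPv : ptFun P v = 0 := hP t htI v hvE
  rw [pderiv_monomial, eval_monomial]
  rcases eq_or_ne (d z) 0 with h0 | h0
  · simp [h0]
  have hv' : ((d - Finsupp.single z 1 : SegreVar m n →₀ ℕ)) v = d v := by
    rw [Finsupp.tsub_apply, Finsupp.single_apply, if_neg (fun h => hvz h.symm),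
      Nat.sub_zero]
  have hvsupp : v ∈ (d - Finsupp.single z 1).support := by
    rw [Finsupp.mem_support_iff, hv']; exact hdv
  have : (d - Finsupp.single z 1).prod (fun i k => ptFun P i ^ k) = 0 := by
    apply Finset.prod_eq_zero hvsupp
    show ptFun P v ^ ((d - Finsupp.single z 1 : SegreVar m n →₀ ℕ)) v = 0
    rw [hv', hPv]
    exact zero_pow hdv
  simp [this]
end
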